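/- arXiv:2308.14677 — 2 statements merged into one kernel-verified Lean document; each statement's English description precedes it below -/
import Mathlib

section
/- Let G be a trigraph and A ⊆ V(G) a set of vertices each with red degree 0. Then tww(G,A) ≤ 2^{|A|}·tww(G) + 2^{|A|+1} − 2, where tww(G,A) is the minimum width of a complete contraction sequence respecting A. -/
open scoped Classical

noncomputable section

/-- A trigraph: a finite graph whose edges are colored black or red. -/
structure Trigraph (V : Type*) where
  black : V → V → Prop
  red : V → V → Prop
  black_symm : ∀ u v, black u v → black v u
  red_symm : ∀ u v, red u v → red v u
  black_irrefl : ∀ v, ¬ black v v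
  red_irrefl : ∀ v, ¬ red v v
  not_black_and_red : ∀ u v, ¬ (black u v ∧ red u v)

variable {V : Type*}

/-- A simple graph seen as a trigraph with no red edges. -/
def SimpleGraph.toTrigraph (G : SimpleGraph V) : Trigraph V where
  black := G.Adj
  red _ _ := False
  black_symm _ _ h := h.symm
  red_symm _ _ h := h.elim
  black_irrefl _ h := G.irrefl h
  red_irrefl _ h := h
  not_black_and_red _ _ h := h.2

/-- Induced subtrigraph on a set of vertices. -/
def Trigraph.induce (G : Trigraph V) (s : Set V) : Trigraph s where
  black u v := G.black u.1 v.1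
  red u v := G.red u.1 v.1
  black_symm _ _ h := G.black_symm _ _ h
  red_symm _ _ h := G.red_symm _ _ h
  black_irrefl v := G.black_irrefl v.1
  red_irrefl v := G.red_irrefl v.1
  not_black_and_red u v := G.not_black_and_red u.1 v.1

/-- The discrete partition of the vertex set into singletons. -/
def discretePart (V : Type*) [Fintype V] : Finset (Finset V) :=
  Finset.univ.image fun v => ({v} : Finset V)

/-- `Q` is obtained from the partition `P` by merging (contracting) two distinct parts. -/
def MergeStep (P Q : Finset (Finset V)) : Prop :=
  ∃ A ∈ P, ∃ B ∈ P, A ≠ B ∧ Q = insert (A ∪ B) ((P.erase A).erase B)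

/-- Two parts are joined by a red edge in the quotient trigraph if there is a red edge
between them, or if they are not homogeneously connected by black edges. -/
def Trigraph.redAdj (G : Trigraph V) (A B : Finset V) : Prop :=
  A ≠ B ∧ ((∃ a ∈ A, ∃ b ∈ B, G.red a b) ∨
    ((∃ a ∈ A, ∃ b ∈ B, G.black a b) ∧ ¬ ∀ a ∈ A, ∀ b ∈ B, G.black a b))

/-- The red degree of a part `A` in the quotient of `G` by the partition `P`. -/
def Trigraph.redDeg (G : Trigraph V) (P : Finset (Finset V)) (A : Finset V) : ℕ :=
  (P.filter fun B => G.redAdj A B).card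

/-- The maximum red degree of the quotient of `G` by the partition `P`. -/
def Trigraph.maxRedDeg (G : Trigraph V) (P : Finset (Finset V)) : ℕ :=
  P.sup fun A => G.redDeg P A

/-- A contraction sequence of partitions: starts with the discrete partition, and each
step merges two parts. -/
def IsCSeq (V : Type*) [Fintype V] (len : ℕ) (f : ℕ → Finset (Finset V)) : Prop :=
  f 0 = discretePart V ∧ ∀ i < len, MergeStep (f i) (f (i + 1))

/-- The twin-width of a trigraph: the minimum over all complete contraction sequences of
the maximum red degree attained. -/
def Trigraph.tww [Fintype V] (G : Trigraph V) : ℕ :=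
  sInf { w | ∃ f : ℕ → Finset (Finset V),
    IsCSeq V (Fintype.card V - 1) f ∧
    f (Fintype.card V - 1) = {Finset.univ} ∧
    ∀ i ≤ Fintype.card V - 1, G.maxRedDeg (f i) ≤ w }

/-- The final partition of a `U`-contraction sequence: `U` is one part,
all other vertices are singletons. -/
def finalOn (V : Type*) [Fintype V] (U : Finset V) : Finset (Finset V) :=
  insert U ((Finset.univ \ U).image fun v => ({v} : Finset V))

/-- `tww_U(G)`: the minimum width of a partial contraction sequence involving only
vertices of `U` and contracting `U` into a single part. -/
def Trigraph.twwOn [Fintype V] (G : Trigraph V) (U : Finset V) : ℕ :=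
  sInf { w | ∃ f : ℕ → Finset (Finset V),
    IsCSeq V (U.card - 1) f ∧ f (U.card - 1) = finalOn V U ∧
    ∀ i ≤ U.card - 1, G.maxRedDeg (f i) ≤ w }

/-- A partition respects `A` if all vertices of `A` are singleton parts of red degree `0`. -/
def Trigraph.Respects (G : Trigraph V) (A : Finset V) (P : Finset (Finset V)) : Prop :=
  (∀ a ∈ A, ({a} : Finset V) ∈ P) ∧ ∀ a ∈ A, G.redDeg P {a} = 0

/-- A partition respecting `A` is complete if no two parts outside `A` have the same
(black) neighborhood in `A`. -/
def Trigraph.CompleteFor (G : Trigraph V) (A : Finset V) (P : Finset (Finset V)) : Prop :=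
  ∀ B ∈ P, ∀ C ∈ P, B ≠ C → Disjoint B A → Disjoint C A →
    ¬ ∀ a ∈ A, ((∃ b ∈ B, G.black b a) ↔ ∃ c ∈ C, G.black c a)

/-- `tww(G, A)`: the minimum width of a complete contraction sequence respecting `A`. -/
def Trigraph.twwR [Fintype V] (G : Trigraph V) (A : Finset V) : ℕ :=
  sInf { w | ∃ (len : ℕ) (f : ℕ → Finset (Finset V)), IsCSeq V len f ∧
    (∀ i ≤ len, G.Respects A (f i)) ∧ G.CompleteFor A (f len) ∧
    ∀ i ≤ len, G.maxRedDeg (f i) ≤ w }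

set_option linter.unusedSectionVars false

namespace TwwAux

open Finset

variable {V : Type*} [Fintype V]

/-- The black neighbourhood type of a vertex inside `A`. -/
def typ (G : Trigraph V) (A : Finset V) (v : V) : Finset V :=
  A.filter (fun a => G.black v a)

/-- The sub-part of `D` consisting of the vertices of type `t`. -/
def pt (G : Trigraph V) (A : Finset V) (D : Finset V) (t : Finset V) : Finset V :=
  D.filter (fun v => typ G A v = t)

/-- The partition of `D` into type classes. -/
def cls (G : Trigraph V) (A : Finset V) (D : Finset V) : Finset (Finset V) :=
  (D.image (typ G A)).image (pt G A D)

/-- The refinement of a single part. -/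
def pieces (G : Trigraph V) (A : Finset V) (E : Finset V) : Finset (Finset V) :=
  ((E ∩ A).image fun a => ({a} : Finset V)) ∪ cls G A (E \ A)

/-- The refinement of a partition. -/
def refn (G : Trigraph V) (A : Finset V) (P : Finset (Finset V)) : Finset (Finset V) :=
  P.biUnion (pieces G A)

def IsPartition (P : Finset (Finset V)) : Prop :=
  (∀ X ∈ P, X.Nonempty) ∧ (∀ X ∈ P, ∀ Y ∈ P, X ≠ Y → Disjoint X Y) ∧
    (∀ v : V, ∃ X ∈ P, v ∈ X)

/-- A set of vertices all having the same type. -/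
def TypConst (G : Trigraph V) (A : Finset V) (Z : Finset V) : Prop :=
  ∀ x ∈ Z, ∀ y ∈ Z, typ G A x = typ G A y

variable {G : Trigraph V} {A : Finset V}

lemma pt_subset {D t : Finset V} : pt G A D t ⊆ D := filter_subset _ _

lemma typ_eq_of_mem_pt {D t : Finset V} {v : V} (h : v ∈ pt G A D t) : typ G A v = t :=
  (mem_filter.mp h).2

lemma mem_pt {D t : Finset V} {v : V} : v ∈ pt G A D t ↔ v ∈ D ∧ typ G A v = t :=
  mem_filter

lemma pt_nonempty {D t : Finset V} (h : t ∈ D.image (typ G A)) : (pt G A D t).Nonempty := by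
  obtain ⟨v, hv, rfl⟩ := mem_image.mp h
  exact ⟨v, mem_pt.mpr ⟨hv, rfl⟩⟩

lemma typConst_pt {D t : Finset V} : TypConst G A (pt G A D t) := by
  intro x hx y hy
  rw [typ_eq_of_mem_pt hx, typ_eq_of_mem_pt hy]

lemma typConst_singleton {v : V} : TypConst G A ({v} : Finset V) := by
  intro x hx y hy
  rw [mem_singleton] at hx hy; subst hx; subst hy; rfl

lemma pt_inj {D t t' : Finset V} (ht : t ∈ D.image (typ G A))
    (h : pt G A D t = pt G A D t') : t = t' := by
  obtain ⟨v, hv⟩ := pt_nonempty ht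
  have hv' := h ▸ hv
  rw [← typ_eq_of_mem_pt hv, typ_eq_of_mem_pt hv']

lemma card_typImage_le (D : Finset V) : (D.image (typ G A)).card ≤ 2 ^ A.card := by
  have : D.image (typ G A) ⊆ A.powerset := by
    intro t ht
    obtain ⟨v, _, rfl⟩ := mem_image.mp ht
    exact mem_powerset.mpr (filter_subset _ _)
  simpa using (card_le_card this).trans (le_of_eq (card_powerset A))

lemma mem_cls {D Z : Finset V} :
    Z ∈ cls G A D ↔ ∃ t ∈ D.image (typ G A), Z = pt G A D t := by
  simp only [cls, mem_image]
  constructor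
  · rintro ⟨t, ht, rfl⟩; exact ⟨t, ht, rfl⟩
  · rintro ⟨t, ht, rfl⟩; exact ⟨t, ht, rfl⟩

lemma card_cls_le (D : Finset V) : (cls G A D).card ≤ 2 ^ A.card :=
  (card_image_le).trans (card_typImage_le D)

lemma cls_nonempty_mem {D Z : Finset V} (h : Z ∈ cls G A D) : Z.Nonempty := by
  obtain ⟨t, ht, rfl⟩ := mem_cls.mp h; exact pt_nonempty ht

lemma cls_subset_mem {D Z : Finset V} (h : Z ∈ cls G A D) : Z ⊆ D := by
  obtain ⟨t, ht, rfl⟩ := mem_cls.mp h; exact pt_subset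

lemma typConst_of_mem_cls {D Z : Finset V} (h : Z ∈ cls G A D) : TypConst G A Z := by
  obtain ⟨t, ht, rfl⟩ := mem_cls.mp h; exact typConst_pt

/-- Monotonicity of red adjacency between parts. -/
lemma redAdj_mono {X Y E F : Finset V} (hXE : X ⊆ E) (hYF : Y ⊆ F) (hEF : E ≠ F)
    (h : G.redAdj X Y) : G.redAdj E F := by
  obtain ⟨-, h⟩ := h
  refine ⟨hEF, ?_⟩
  rcases h with ⟨a, ha, b, hb, hr⟩ | ⟨⟨a, ha, b, hb, hbl⟩, hnot⟩
  · exact Or.inl ⟨a, hXE ha, b, hYF hb, hr⟩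
  · exact Or.inr ⟨⟨a, hXE ha, b, hYF hb, hbl⟩,
      fun hall => hnot fun a ha b hb => hall a (hXE ha) b (hYF hb)⟩

lemma not_redAdj_self {X : Finset V} : ¬ G.redAdj X X := fun h => h.1 rfl

section NoRed
variable (hA : ∀ a ∈ A, ∀ b, ¬ G.red a b)
include hA

lemma black_iff_mem_typ {v a : V} (ha : a ∈ A) : G.black v a ↔ a ∈ typ G A v := by
  simp [typ, ha]

lemma not_redAdj_singleton_left {a : V} {Z : Finset V} (ha : a ∈ A)
    (hZ : TypConst G A Z) : ¬ G.redAdj {a} Z := by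
  rintro ⟨-, h⟩
  rcases h with ⟨x, hx, y, hy, hr⟩ | ⟨⟨x, hx, y, hy, hbl⟩, hnot⟩
  · obtain rfl : x = a := mem_singleton.mp hx
    exact hA x ha y hr
  · obtain rfl : x = a := mem_singleton.mp hx
    refine hnot fun u hu z hz => ?_
    obtain rfl : u = x := mem_singleton.mp hu
    have h1 : u ∈ typ G A y := (black_iff_mem_typ hA ha).mp (G.black_symm _ _ hbl)
    have h2 : u ∈ typ G A z := (hZ y hy z hz) ▸ h1
    exact G.black_symm _ _ ((black_iff_mem_typ hA ha).mpr h2)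

lemma not_redAdj_singleton_right {a : V} {Z : Finset V} (ha : a ∈ A)
    (hZ : TypConst G A Z) : ¬ G.redAdj Z {a} := by
  rintro ⟨-, h⟩
  rcases h with ⟨x, hx, y, hy, hr⟩ | ⟨⟨x, hx, y, hy, hbl⟩, hnot⟩
  · obtain rfl : y = a := mem_singleton.mp hy
    exact hA y ha x (G.red_symm _ _ hr)
  · obtain rfl : y = a := mem_singleton.mp hy
    refine hnot fun z hz u hu => ?_
    obtain rfl : u = y := mem_singleton.mp hu
    have h1 : u ∈ typ G A x := (black_iff_mem_typ hA ha).mp hbl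
    have h2 : u ∈ typ G A z := (hZ x hx z hz) ▸ h1
    exact (black_iff_mem_typ hA ha).mpr h2

end NoRed

end TwwAux
namespace TwwAux

open Finset

variable {V : Type*} [Fintype V] {G : Trigraph V} {A : Finset V}

/-- One admissible step of the transformed sequence. -/
def Step (G : Trigraph V) (A : Finset V) (W : ℕ) (P Q : Finset (Finset V)) : Prop :=
  MergeStep P Q ∧ G.maxRedDeg Q ≤ W ∧ G.Respects A Q

lemma chain_to_seq {W : ℕ} {P₀ Pf : Finset (Finset V)}
    (h : Relation.ReflTransGen (Step G A W) P₀ Pf) :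
    ∃ (len : ℕ) (f : ℕ → Finset (Finset V)), f 0 = P₀ ∧
      (∀ i < len, MergeStep (f i) (f (i + 1))) ∧ f len = Pf ∧
      (∀ i, 0 < i → i ≤ len → G.maxRedDeg (f i) ≤ W ∧ G.Respects A (f i)) := by
  induction h with
  | refl => exact ⟨0, fun _ => P₀, rfl, by omega, rfl, by omega⟩
  | @tail Pm Pq hchain hstep ih =>
    obtain ⟨len, f, hf0, hmerge, hflen, hside⟩ := ih
    refine ⟨len + 1, fun i => if i ≤ len then f i else Pq, ?_, ?_, ?_, ?_⟩
    · simp [hf0]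
    · intro i hi
      by_cases h1 : i + 1 ≤ len
      · have h2 : i ≤ len := by omega
        simp only []
        rw [if_pos h2, if_pos h1]
        exact hmerge i (by omega)
      · have h2 : i ≤ len := by omega
        have h3 : i = len := by omega
        simp only []
        rw [if_pos h2, if_neg h1, h3, hflen]
        exact hstep.1
    · simp only []
      rw [if_neg (by omega)]
    · intro i hi0 hi
      simp only []
      by_cases h1 : i ≤ len
      · rw [if_pos h1]; exact hside i hi0 h1
      · rw [if_neg h1]; exact ⟨hstep.2.1, hstep.2.2⟩

lemma twwR_le_of_chain {W : ℕ} {Pf : Finset (Finset V)}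
    (h : Relation.ReflTransGen (Step G A W) (discretePart V) Pf)
    (h0w : G.maxRedDeg (discretePart V) ≤ W) (h0r : G.Respects A (discretePart V))
    (hcomp : G.CompleteFor A Pf) : G.twwR A ≤ W := by
  obtain ⟨len, f, hf0, hmerge, hflen, hside⟩ := chain_to_seq h
  refine Nat.sInf_le ⟨len, f, ⟨hf0, hmerge⟩, ?_, hflen ▸ hcomp, ?_⟩
  · intro i hi
    rcases Nat.eq_zero_or_pos i with rfl | hp
    · exact hf0 ▸ h0r
    · exact (hside i hp hi).2
  · intro i hi
    rcases Nat.eq_zero_or_pos i with rfl | hp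
    · exact hf0 ▸ h0w
    · exact (hside i hp hi).1

lemma isPartition_discrete : IsPartition (discretePart V) := by
  refine ⟨?_, ?_, ?_⟩
  · intro X hX
    obtain ⟨v, -, rfl⟩ := mem_image.mp hX
    exact singleton_nonempty v
  · intro X hX Y hY hne
    obtain ⟨v, -, rfl⟩ := mem_image.mp hX
    obtain ⟨u, -, rfl⟩ := mem_image.mp hY
    simp only [disjoint_singleton_left, mem_singleton]
    intro h; exact hne (by rw [h])
  · intro v
    exact ⟨{v}, mem_image.mpr ⟨v, mem_univ v, rfl⟩, mem_singleton_self v⟩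

lemma unionBC_notMem {P : Finset (Finset V)} (hP : IsPartition P) {B C : Finset V}
    (hB : B ∈ P) (hBne : B.Nonempty) (hBC : B ≠ C) :
    B ∪ C ∉ (P.erase B).erase C := by
  intro hmem
  have h1 : B ∪ C ∈ P := mem_of_mem_erase (mem_of_mem_erase hmem)
  have hd := hP.2.1 _ h1 _ hB (ne_of_mem_erase (mem_of_mem_erase hmem))
  obtain ⟨v, hv⟩ := hBne
  exact (disjoint_left.mp hd) (mem_union_left _ hv) hv

lemma isPartition_merge {P : Finset (Finset V)} (hP : IsPartition P) {B C : Finset V}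
    (hB : B ∈ P) (hC : C ∈ P) (hBC : B ≠ C) :
    IsPartition (insert (B ∪ C) ((P.erase B).erase C)) := by
  obtain ⟨hne, hdisj, hcov⟩ := hP
  refine ⟨?_, ?_, ?_⟩
  · intro X hX
    rcases mem_insert.mp hX with rfl | hX'
    · exact (hne B hB).mono subset_union_left
    · exact hne X (mem_of_mem_erase (mem_of_mem_erase hX'))
  · intro X hX Y hY hXY
    rcases mem_insert.mp hX with rfl | hX' <;> rcases mem_insert.mp hY with rfl | hY'
    · exact absurd rfl hXY
    · have hYP := mem_of_mem_erase (mem_of_mem_erase hY')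
      have h1 : Y ≠ B := ne_of_mem_erase (mem_of_mem_erase hY')
      have h2 : Y ≠ C := ne_of_mem_erase hY'
      exact disjoint_union_left.mpr
        ⟨(hdisj _ hB _ hYP h1.symm).symm.symm, (hdisj _ hC _ hYP h2.symm).symm.symm⟩
        |>.symm.symm
    · have hXP := mem_of_mem_erase (mem_of_mem_erase hX')
      have h1 : X ≠ B := ne_of_mem_erase (mem_of_mem_erase hX')
      have h2 : X ≠ C := ne_of_mem_erase hX'
      exact disjoint_union_right.mpr ⟨hdisj _ hXP _ hB h1, hdisj _ hXP _ hC h2⟩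
    · exact hdisj _ (mem_of_mem_erase (mem_of_mem_erase hX')) _
        (mem_of_mem_erase (mem_of_mem_erase hY')) hXY
  · intro v
    obtain ⟨X, hX, hvX⟩ := hcov v
    by_cases h1 : X = B
    · exact ⟨B ∪ C, mem_insert_self _ _, mem_union_left _ (h1 ▸ hvX)⟩
    by_cases h2 : X = C
    · exact ⟨B ∪ C, mem_insert_self _ _, mem_union_right _ (h2 ▸ hvX)⟩
    · exact ⟨X, mem_insert_of_mem (mem_erase.mpr ⟨h2, mem_erase.mpr ⟨h1, hX⟩⟩), hvX⟩

/-- Trivial width bound valid for any family of parts. -/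
lemma maxRedDeg_le_univ (G : Trigraph V) (P : Finset (Finset V)) :
    G.maxRedDeg P ≤ 2 ^ Fintype.card V := by
  refine Finset.sup_le fun X _ => ?_
  calc (P.filter fun B => G.redAdj X B).card ≤ P.card := card_filter_le _ _
    _ ≤ (univ : Finset V).powerset.card := card_le_card fun Z _ => mem_powerset.mpr (subset_univ Z)
    _ = 2 ^ Fintype.card V := by rw [card_powerset, card_univ]

lemma card_merge {P : Finset (Finset V)} (hP : IsPartition P) {B C : Finset V}
    (hB : B ∈ P) (hC : C ∈ P) (hBC : B ≠ C) :
    (insert (B ∪ C) ((P.erase B).erase C)).card = P.card - 1 := by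
  rw [card_insert_of_notMem (unionBC_notMem hP hB (hP.1 B hB) hBC),
    card_erase_of_mem (mem_erase.mpr ⟨hBC.symm, hC⟩), card_erase_of_mem hB]
  have h2 : 2 ≤ P.card := one_lt_card.mpr ⟨B, hB, C, hC, hBC⟩
  omega

/-- From any partition one can contract down to the single part `univ`. -/
lemma exists_full_seq [Nonempty V] :
    ∀ (n : ℕ) (P : Finset (Finset V)), IsPartition P → P.card = n →
    ∃ f : ℕ → Finset (Finset V), f 0 = P ∧
      (∀ i < n - 1, MergeStep (f i) (f (i + 1))) ∧ f (n - 1) = {Finset.univ} := by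
  intro n
  induction n using Nat.strong_induction_on with
  | _ n ih =>
  intro P hP hcard
  match n, hcard with
  | 0, hcard =>
    obtain ⟨X, hX, -⟩ := hP.2.2 (Classical.arbitrary V)
    rw [card_eq_zero.mp hcard] at hX
    exact absurd hX (notMem_empty X)
  | 1, hcard =>
    obtain ⟨X, hX⟩ := card_eq_one.mp hcard
    have hXu : X = Finset.univ := by
      apply eq_univ_of_forall
      intro v
      obtain ⟨Y, hY, hvY⟩ := hP.2.2 v
      rw [hX, mem_singleton] at hY
      exact hY ▸ hvY
    exact ⟨fun _ => {Finset.univ}, by rw [hX, hXu], by omega, rfl⟩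
  | (m + 2), hcard =>
    obtain ⟨B, hB, C, hC, hBC⟩ := one_lt_card.mp (show 1 < P.card by omega)
    set Pq := insert (B ∪ C) ((P.erase B).erase C) with hQ
    have hQP : IsPartition Pq := isPartition_merge hP hB hC hBC
    have hQcard : Pq.card = m + 1 := by rw [hQ, card_merge hP hB hC hBC, hcard]; omega
    obtain ⟨g, hg0, hgm, hglast⟩ := ih (m + 1) (by omega) Pq hQP hQcard
    refine ⟨fun i => if i = 0 then P else g (i - 1), by simp, ?_, by simpa using hglast⟩
    intro i hi
    rcases Nat.eq_zero_or_pos i with rfl | hp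
    · simpa [hg0] using ⟨B, hB, C, hC, hBC, hQ⟩
    · have h1 : i ≠ 0 := by omega
      have h2 : i + 1 ≠ 0 := by omega
      simp only [h1, h2, if_false]
      have : i - 1 + 1 = i := by omega
      rw [← this]
      exact hgm (i - 1) (by omega)

lemma tww_set_nonempty [Nonempty V] :
    ∃ w, w ∈ { w | ∃ f : ℕ → Finset (Finset V),
      IsCSeq V (Fintype.card V - 1) f ∧
      f (Fintype.card V - 1) = {Finset.univ} ∧
      ∀ i ≤ Fintype.card V - 1, G.maxRedDeg (f i) ≤ w } := by
  have hcard : (discretePart V).card = Fintype.card V := by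
    rw [discretePart, card_image_of_injective _ (fun a b h => singleton_inj.mp h), card_univ]
  obtain ⟨f, hf0, hfm, hfl⟩ := exists_full_seq (V := V) (Fintype.card V) (discretePart V)
    isPartition_discrete hcard
  exact ⟨2 ^ Fintype.card V, f, ⟨hf0, hfm⟩, hfl, fun i _ => maxRedDeg_le_univ G (f i)⟩

end TwwAux
namespace TwwAux

open Finset

variable {V : Type*} [Fintype V]

/-- Context for one stage: a partition `P` with two distinct parts `B`, `C` to merge. -/
structure StageCtx (G : Trigraph V) (A : Finset V) where
  P : Finset (Finset V)
  B : Finset V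
  C : Finset V
  hP : IsPartition P
  hB : B ∈ P
  hC : C ∈ P
  hBC : B ≠ C

variable {G : Trigraph V} {A : Finset V}

namespace StageCtx

variable (c : StageCtx G A)

def Q : Finset (Finset V) := insert (c.B ∪ c.C) ((c.P.erase c.B).erase c.C)

def tB : Finset (Finset V) := (c.B \ A).image (typ G A)
def tC : Finset (Finset V) := (c.C \ A).image (typ G A)

/-- Parts of the active region after the types in `T` have been merged. -/
def stM (T : Finset (Finset V)) : Finset (Finset V) :=
  T.image (pt G A ((c.B ∪ c.C) \ A)) ∪ (c.tB \ T).image (pt G A (c.B \ A))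
    ∪ (c.tC \ T).image (pt G A (c.C \ A))

/-- The parts outside the active region, plus the `A`-singletons of the active region. -/
def stCore : Finset (Finset V) :=
  (c.Q.erase (c.B ∪ c.C)).biUnion (pieces G A) ∪
    ((c.B ∪ c.C) ∩ A).image (fun a => ({a} : Finset V))

def state (T : Finset (Finset V)) : Finset (Finset V) := c.stCore ∪ c.stM T

def swap : StageCtx G A := ⟨c.P, c.C, c.B, c.hP, c.hC, c.hB, c.hBC.symm⟩

lemma disjBC : Disjoint c.B c.C := c.hP.2.1 _ c.hB _ c.hC c.hBC

lemma swap_Q : c.swap.Q = c.Q := by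
  rw [Q, Q, swap, union_comm, erase_right_comm]

lemma swap_B : c.swap.B = c.C := rfl
lemma swap_C : c.swap.C = c.B := rfl
lemma swap_tB : c.swap.tB = c.tC := rfl
lemma swap_tC : c.swap.tC = c.tB := rfl

lemma swap_stCore : c.swap.stCore = c.stCore := by
  unfold stCore
  rw [swap_Q, swap_B, swap_C, union_comm c.C c.B]

lemma swap_stM (T : Finset (Finset V)) : c.swap.stM T = c.stM T := by
  unfold stM
  rw [swap_B, swap_C, swap_tB, swap_tC, union_comm c.C c.B, union_right_comm]

lemma swap_state (T : Finset (Finset V)) : c.swap.state T = c.state T := by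
  rw [state, state, swap_stCore, swap_stM]

lemma mergeStep : MergeStep c.P c.Q := ⟨c.B, c.hB, c.C, c.hC, c.hBC, rfl⟩

lemma isPartition_Q : IsPartition c.Q := isPartition_merge c.hP c.hB c.hC c.hBC

lemma Q_erase : c.Q.erase (c.B ∪ c.C) = (c.P.erase c.B).erase c.C := by
  rw [Q, erase_insert (unionBC_notMem c.hP c.hB (c.hP.1 _ c.hB) c.hBC)]

lemma unionBC_mem_Q : c.B ∪ c.C ∈ c.Q := mem_insert_self _ _

lemma mem_Q_erase {E : Finset V} (h : E ∈ c.Q.erase (c.B ∪ c.C)) :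
    E ∈ c.P ∧ E ≠ c.B ∧ E ≠ c.C := by
  rw [Q_erase] at h
  exact ⟨mem_of_mem_erase (mem_of_mem_erase h),
    ne_of_mem_erase (mem_of_mem_erase h), ne_of_mem_erase h⟩

lemma disj_of_mem_Q_erase {E : Finset V} (h : E ∈ c.Q.erase (c.B ∪ c.C)) :
    Disjoint E (c.B ∪ c.C) := by
  obtain ⟨hEP, hEB, hEC⟩ := c.mem_Q_erase h
  exact disjoint_union_right.mpr ⟨c.hP.2.1 _ hEP _ c.hB hEB, c.hP.2.1 _ hEP _ c.hC hEC⟩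

lemma sdiff_union : (c.B ∪ c.C) \ A = (c.B \ A) ∪ (c.C \ A) := union_sdiff_distrib ..

lemma typImage_union : ((c.B ∪ c.C) \ A).image (typ G A) = c.tB ∪ c.tC := by
  rw [sdiff_union, image_union, tB, tC]

lemma pt_full_eq (t : Finset V) :
    pt G A ((c.B ∪ c.C) \ A) t = pt G A (c.B \ A) t ∪ pt G A (c.C \ A) t := by
  rw [sdiff_union, pt, pt, pt, filter_union]

lemma pt_empty_of_notMem {D t : Finset V} (h : t ∉ D.image (typ G A)) :
    pt G A D t = (∅ : Finset V) := by
  rw [pt, filter_eq_empty_iff]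
  intro v hv hvt
  exact h (mem_image.mpr ⟨v, hv, hvt⟩)

lemma pt_full_eq_left {t : Finset V} (h : t ∉ c.tC) :
    pt G A ((c.B ∪ c.C) \ A) t = pt G A (c.B \ A) t := by
  rw [pt_full_eq, pt_empty_of_notMem h, union_empty]

lemma pt_full_eq_right {t : Finset V} (h : t ∉ c.tB) :
    pt G A ((c.B ∪ c.C) \ A) t = pt G A (c.C \ A) t := by
  rw [pt_full_eq, pt_empty_of_notMem h, empty_union]

/-- Shape of core elements. -/
lemma core_shape {Z : Finset V} (h : Z ∈ c.stCore) :
    (∃ a ∈ A, Z = {a}) ∨ ∃ E ∈ c.Q.erase (c.B ∪ c.C), Z ∈ cls G A (E \ A) := by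
  rcases mem_union.mp h with h | h
  · obtain ⟨E, hE, hZ⟩ := mem_biUnion.mp h
    rcases mem_union.mp hZ with h' | h'
    · obtain ⟨a, ha, rfl⟩ := mem_image.mp h'
      exact Or.inl ⟨a, (mem_inter.mp ha).2, rfl⟩
    · exact Or.inr ⟨E, hE, h'⟩
  · obtain ⟨a, ha, rfl⟩ := mem_image.mp h
    exact Or.inl ⟨a, (mem_inter.mp ha).2, rfl⟩

/-- Shape of region elements. -/
lemma stM_shape {T : Finset (Finset V)} {Z : Finset V} (hT : T ⊆ c.tB ∩ c.tC) (h : Z ∈ c.stM T) :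
    (∃ t ∈ T, Z = pt G A ((c.B ∪ c.C) \ A) t) ∨
    (∃ t ∈ c.tB \ T, Z = pt G A (c.B \ A) t) ∨
    (∃ t ∈ c.tC \ T, Z = pt G A (c.C \ A) t) := by
  rcases mem_union.mp h with h | h
  · rcases mem_union.mp h with h | h
    · obtain ⟨t, ht, rfl⟩ := mem_image.mp h
      exact Or.inl ⟨t, ht, rfl⟩
    · obtain ⟨t, ht, rfl⟩ := mem_image.mp h
      exact Or.inr (Or.inl ⟨t, ht, rfl⟩)
  · obtain ⟨t, ht, rfl⟩ := mem_image.mp h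
    exact Or.inr (Or.inr ⟨t, ht, rfl⟩)

lemma state_typConst {T : Finset (Finset V)} {Z : Finset V} (hT : T ⊆ c.tB ∩ c.tC) (h : Z ∈ c.state T) :
    TypConst G A Z := by
  rcases mem_union.mp h with h | h
  · rcases c.core_shape h with ⟨a, -, rfl⟩ | ⟨E, -, hZ⟩
    · exact typConst_singleton
    · exact typConst_of_mem_cls hZ
  · rcases c.stM_shape hT h with ⟨t, -, rfl⟩ | ⟨t, -, rfl⟩ | ⟨t, -, rfl⟩ <;> exact typConst_pt

/-- Every element of a state is nonempty; region & core elements are located. -/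
lemma stM_subset {T : Finset (Finset V)} {Z : Finset V} (hT : T ⊆ c.tB ∩ c.tC) (h : Z ∈ c.stM T) :
    Z ⊆ (c.B ∪ c.C) \ A := by
  rcases c.stM_shape hT h with ⟨t, -, rfl⟩ | ⟨t, -, rfl⟩ | ⟨t, -, rfl⟩
  · exact pt_subset
  · exact pt_subset.trans (sdiff_subset_sdiff subset_union_left le_rfl)
  · exact pt_subset.trans (sdiff_subset_sdiff subset_union_right le_rfl)

end StageCtx

end TwwAux
namespace TwwAux

open Finset

variable {V : Type*} [Fintype V] {G : Trigraph V} {A : Finset V}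

lemma ne_of_disj {X Y : Finset V} (hX : X.Nonempty) (h : Disjoint X Y) : X ≠ Y := by
  rintro rfl
  obtain ⟨v, hv⟩ := hX
  exact (disjoint_left.mp h) hv hv

namespace StageCtx

variable (c : StageCtx G A)

lemma P_decomp : c.P = insert c.B (insert c.C ((c.P.erase c.B).erase c.C)) := by
  rw [insert_erase (mem_erase.mpr ⟨c.hBC.symm, c.hC⟩), insert_erase c.hB]

lemma bc_inter_image :
    ((c.B ∪ c.C) ∩ A).image (fun a => ({a} : Finset V)) =
      (c.B ∩ A).image (fun a => ({a} : Finset V)) ∪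
        (c.C ∩ A).image (fun a => ({a} : Finset V)) := by
  rw [union_inter_distrib_right, image_union]

lemma state_empty : c.state ∅ = refn G A c.P := by
  have h1 : c.tB.image (pt G A (c.B \ A)) = cls G A (c.B \ A) := rfl
  have h2 : c.tC.image (pt G A (c.C \ A)) = cls G A (c.C \ A) := rfl
  rw [state, stM, stCore, Q_erase, image_empty, sdiff_empty, sdiff_empty, h1, h2,
    empty_union, bc_inter_image, refn]
  conv_rhs => rw [c.P_decomp]
  rw [biUnion_insert, biUnion_insert, pieces, pieces]
  ext Z
  simp only [mem_union]
  tauto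

lemma stM_full : c.stM (c.tB ∩ c.tC) = cls G A ((c.B ∪ c.C) \ A) := by
  ext Z
  constructor
  · intro h
    rcases c.stM_shape le_rfl h with ⟨t, ht, rfl⟩ | ⟨t, ht, rfl⟩ | ⟨t, ht, rfl⟩
    · exact mem_cls.mpr ⟨t, c.typImage_union ▸ mem_union_left _ (mem_inter.mp ht).1, rfl⟩
    · rw [mem_sdiff, mem_inter] at ht
      have htC : t ∉ c.tC := fun hc => ht.2 ⟨ht.1, hc⟩
      exact mem_cls.mpr ⟨t, c.typImage_union ▸ mem_union_left _ ht.1,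
        (c.pt_full_eq_left htC).symm⟩
    · rw [mem_sdiff, mem_inter] at ht
      have htB : t ∉ c.tB := fun hb => ht.2 ⟨hb, ht.1⟩
      exact mem_cls.mpr ⟨t, c.typImage_union ▸ mem_union_right _ ht.1,
        (c.pt_full_eq_right htB).symm⟩
  · intro h
    obtain ⟨t, htI, rfl⟩ := mem_cls.mp h
    rw [c.typImage_union, mem_union] at htI
    by_cases hB : t ∈ c.tB <;> by_cases hC : t ∈ c.tC
    · exact mem_union_left _ (mem_union_left _
        (mem_image_of_mem _ (mem_inter.mpr ⟨hB, hC⟩)))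
    · refine mem_union_left _ (mem_union_right _ ?_)
      rw [c.pt_full_eq_left hC]
      exact mem_image_of_mem _ (mem_sdiff.mpr ⟨hB, fun hc => hC (mem_inter.mp hc).2⟩)
    · refine mem_union_right _ ?_
      rw [c.pt_full_eq_right hB]
      exact mem_image_of_mem _ (mem_sdiff.mpr ⟨hC, fun hc => hB (mem_inter.mp hc).1⟩)
    · rcases htI with h' | h' <;> [exact absurd h' hB; exact absurd h' hC]

lemma state_full : c.state (c.tB ∩ c.tC) = refn G A c.Q := by
  rw [state, stM_full, stCore, refn, Q, biUnion_insert, ← Q, Q_erase, pieces]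
  ext Z
  simp only [mem_union]
  tauto

lemma core_ne_sub {Z W' : Finset V} (hZ : Z ∈ c.stCore) (hW : W' ⊆ (c.B ∪ c.C) \ A)
    (hWne : W'.Nonempty) : Z ≠ W' := by
  rintro rfl
  obtain ⟨v, hv⟩ := hWne
  have hv' := mem_sdiff.mp (hW hv)
  rcases c.core_shape hZ with ⟨a, ha, rfl⟩ | ⟨E, hE, hZc⟩
  · rw [mem_singleton] at hv
    exact hv'.2 (hv ▸ ha)
  · have : v ∈ E := sdiff_subset (cls_subset_mem hZc hv)
    exact (disjoint_left.mp (c.disj_of_mem_Q_erase hE)) this hv'.1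

lemma Bpart_nonempty {t : Finset V} (ht : t ∈ c.tB) : (pt G A (c.B \ A) t).Nonempty :=
  pt_nonempty ht

lemma Bpart_sub {t : Finset V} : pt G A (c.B \ A) t ⊆ c.B := pt_subset.trans sdiff_subset

lemma Cpart_sub {t : Finset V} : pt G A (c.C \ A) t ⊆ c.C := pt_subset.trans sdiff_subset

lemma Bpart_sub' {t : Finset V} : pt G A (c.B \ A) t ⊆ (c.B ∪ c.C) \ A :=
  pt_subset.trans (sdiff_subset_sdiff subset_union_left le_rfl)

lemma Cpart_sub' {t : Finset V} : pt G A (c.C \ A) t ⊆ (c.B ∪ c.C) \ A :=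
  pt_subset.trans (sdiff_subset_sdiff subset_union_right le_rfl)

lemma Bpart_ne_Cpart {t s : Finset V} (ht : t ∈ c.tB) :
    pt G A (c.B \ A) t ≠ pt G A (c.C \ A) s :=
  ne_of_disj (c.Bpart_nonempty ht)
    (c.disjBC.mono c.Bpart_sub c.Cpart_sub)

lemma full_ne_Bpart {t s : Finset V} (ht : t ∈ c.tC) :
    pt G A ((c.B ∪ c.C) \ A) t ≠ pt G A (c.B \ A) s := by
  intro h
  obtain ⟨v, hv⟩ := pt_nonempty ht
  have hv1 : v ∈ pt G A ((c.B ∪ c.C) \ A) t := by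
    rw [c.pt_full_eq]; exact mem_union_right _ hv
  have hv2 : v ∈ c.B := c.Bpart_sub (h ▸ hv1)
  exact (disjoint_right.mp c.disjBC) (c.Cpart_sub hv) hv2

lemma full_ne_Cpart {t s : Finset V} (ht : t ∈ c.tB) :
    pt G A ((c.B ∪ c.C) \ A) t ≠ pt G A (c.C \ A) s := by
  intro h
  obtain ⟨v, hv⟩ := pt_nonempty ht
  have hv1 : v ∈ pt G A ((c.B ∪ c.C) \ A) t := by
    rw [c.pt_full_eq]; exact mem_union_left _ hv
  have hv2 : v ∈ c.C := c.Cpart_sub (h ▸ hv1)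
  exact (disjoint_left.mp c.disjBC) (c.Bpart_sub hv) hv2

lemma mem_stM_MT {T : Finset (Finset V)} {s : Finset V} (hs : s ∈ T) :
    pt G A ((c.B ∪ c.C) \ A) s ∈ c.stM T :=
  mem_union_left _ (mem_union_left _ (mem_image_of_mem _ hs))

lemma mem_stM_MB {T : Finset (Finset V)} {s : Finset V} (hs : s ∈ c.tB \ T) :
    pt G A (c.B \ A) s ∈ c.stM T :=
  mem_union_left _ (mem_union_right _ (mem_image_of_mem _ hs))

lemma mem_stM_MC {T : Finset (Finset V)} {s : Finset V} (hs : s ∈ c.tC \ T) :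
    pt G A (c.C \ A) s ∈ c.stM T :=
  mem_union_right _ (mem_image_of_mem _ hs)

lemma state_merge {T : Finset (Finset V)} {t : Finset V} (hT : T ⊆ c.tB ∩ c.tC)
    (ht : t ∈ (c.tB ∩ c.tC) \ T) : MergeStep (c.state T) (c.state (insert t T)) := by
  obtain ⟨htI, htT⟩ := mem_sdiff.mp ht
  obtain ⟨htB, htC⟩ := mem_inter.mp htI
  set X := pt G A (c.B \ A) t with hXdef
  set Y := pt G A (c.C \ A) t with hYdef
  have hXY : X ≠ Y := c.Bpart_ne_Cpart htB
  have hXmem : X ∈ c.state T := mem_union_right _ (c.mem_stM_MB (mem_sdiff.mpr ⟨htB, htT⟩))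
  have hYmem : Y ∈ c.state T := mem_union_right _ (c.mem_stM_MC (mem_sdiff.mpr ⟨htC, htT⟩))
  have hXuY : X ∪ Y = pt G A ((c.B ∪ c.C) \ A) t := (c.pt_full_eq t).symm
  refine ⟨X, hXmem, Y, hYmem, hXY, ?_⟩
  ext Z
  simp only [mem_insert, mem_erase]
  constructor
  · intro hZ
    have hT' : insert t T ⊆ c.tB ∩ c.tC := insert_subset htI hT
    rcases mem_union.mp hZ with hc | hm
    · exact Or.inr ⟨c.core_ne_sub hc c.Cpart_sub' (pt_nonempty htC),
        c.core_ne_sub hc c.Bpart_sub' (pt_nonempty htB), mem_union_left _ hc⟩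
    · rcases c.stM_shape hT' hm with ⟨s, hs, rfl⟩ | ⟨s, hs, rfl⟩ | ⟨s, hs, rfl⟩
      · rcases mem_insert.mp hs with rfl | hsT
        · exact Or.inl hXuY.symm
        · have hsI := mem_inter.mp (hT hsT)
          exact Or.inr ⟨c.full_ne_Cpart hsI.1, c.full_ne_Bpart hsI.2,
            mem_union_right _ (c.mem_stM_MT hsT)⟩
      · obtain ⟨hsB, hsT⟩ := mem_sdiff.mp hs
        have hst : s ≠ t := fun h => (h ▸ hsT) (mem_insert_self t T)
        refine Or.inr ⟨c.Bpart_ne_Cpart hsB, ?_, mem_union_right _ (c.mem_stM_MB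
          (mem_sdiff.mpr ⟨hsB, fun h => hsT (mem_insert_of_mem h)⟩))⟩
        intro h
        exact hst (pt_inj hsB h)
      · obtain ⟨hsC, hsT⟩ := mem_sdiff.mp hs
        have hst : s ≠ t := fun h => (h ▸ hsT) (mem_insert_self t T)
        refine Or.inr ⟨?_, (c.Bpart_ne_Cpart htB).symm,
          mem_union_right _ (c.mem_stM_MC (mem_sdiff.mpr ⟨hsC,
            fun h => hsT (mem_insert_of_mem h)⟩))⟩
        intro h
        exact hst (pt_inj hsC h)
  · rintro (rfl | ⟨hZY, hZX, hZ⟩)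
    · rw [hXuY]
      exact mem_union_right _ (c.mem_stM_MT (mem_insert_self t T))
    · rcases mem_union.mp hZ with hc | hm
      · exact mem_union_left _ hc
      · rcases c.stM_shape hT hm with ⟨s, hs, rfl⟩ | ⟨s, hs, rfl⟩ | ⟨s, hs, rfl⟩
        · exact mem_union_right _ (c.mem_stM_MT (mem_insert_of_mem hs))
        · have hsB := (mem_sdiff.mp hs).1
          have hst : s ≠ t := by
            rintro rfl
            exact hZX rfl
          exact mem_union_right _ (c.mem_stM_MB (mem_sdiff.mpr ⟨hsB, by
            simp only [mem_insert]
            push_neg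
            exact ⟨hst, (mem_sdiff.mp hs).2⟩⟩))
        · have hsC := (mem_sdiff.mp hs).1
          have hst : s ≠ t := by
            rintro rfl
            exact hZY rfl
          exact mem_union_right _ (c.mem_stM_MC (mem_sdiff.mpr ⟨hsC, by
            simp only [mem_insert]
            push_neg
            exact ⟨hst, (mem_sdiff.mp hs).2⟩⟩))
end StageCtx

end TwwAux
namespace TwwAux

open Finset

variable {V : Type*} [Fintype V] {G : Trigraph V} {A : Finset V}

lemma pieces_subset_part {F Z : Finset V} (h : Z ∈ pieces G A F) : Z ⊆ F := by
  rcases mem_union.mp h with h | h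
  · obtain ⟨a, ha, rfl⟩ := mem_image.mp h
    exact singleton_subset_iff.mpr (mem_inter.mp ha).1
  · exact (cls_subset_mem h).trans sdiff_subset

lemma filter_union_card_le (s₁ s₂ : Finset (Finset V)) (p : Finset V → Prop) :
    ((s₁ ∪ s₂).filter p).card ≤ (s₁.filter p).card + (s₂.filter p).card := by
  rw [filter_union]; exact card_union_le _ _

section Counting
variable (hA : ∀ a ∈ A, ∀ b, ¬ G.red a b)
include hA

lemma cnt_pieces_le {X F : Finset V} (hXc : TypConst G A X) :
    ((pieces G A F).filter (fun Y => G.redAdj X Y)).card ≤ 2 ^ A.card := by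
  have hsub : (pieces G A F).filter (fun Y => G.redAdj X Y) ⊆ cls G A (F \ A) := by
    intro Z hZ
    obtain ⟨hZp, hZa⟩ := mem_filter.mp hZ
    rcases mem_union.mp hZp with h | h
    · obtain ⟨a, ha, rfl⟩ := mem_image.mp h
      exact absurd hZa (not_redAdj_singleton_right hA (mem_inter.mp ha).2 hXc)
    · exact h
  exact (card_le_card hsub).trans (card_cls_le _)

omit hA in
lemma cnt_pieces_eq_zero {X E₀ F : Finset V} (hX : X ⊆ E₀) (hne : E₀ ≠ F)
    (hnadj : ¬ G.redAdj E₀ F) :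
    ((pieces G A F).filter (fun Y => G.redAdj X Y)).card = 0 := by
  rw [card_eq_zero, filter_eq_empty_iff]
  intro Z hZ hadj
  exact hnadj (redAdj_mono hX (pieces_subset_part hZ) hne hadj)

lemma cnt_biUnion_le {s : Finset (Finset V)} {X E₀ : Finset V} (hXc : TypConst G A X)
    (hX : X ⊆ E₀) (hE₀ : E₀ ∉ s) :
    ((s.biUnion (pieces G A)).filter (fun Y => G.redAdj X Y)).card
      ≤ 2 ^ A.card * (s.filter (fun F => G.redAdj E₀ F)).card := by
  rw [filter_biUnion]
  refine card_biUnion_le.trans ?_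
  have h1 : ∀ F ∈ s, ((pieces G A F).filter (fun Y => G.redAdj X Y)).card
      ≤ if G.redAdj E₀ F then 2 ^ A.card else 0 := by
    intro F hF
    by_cases hadj : G.redAdj E₀ F
    · rw [if_pos hadj]; exact cnt_pieces_le hA hXc
    · rw [if_neg hadj, cnt_pieces_eq_zero hX (fun h => hE₀ (h ▸ hF)) hadj]
  refine (sum_le_sum h1).trans ?_
  rw [← sum_filter, sum_const, smul_eq_mul, mul_comm]

lemma cnt_singles_eq_zero {X : Finset V} (hXc : TypConst G A X) (s : Finset V) :
    (((s ∩ A).image fun a => ({a} : Finset V)).filter (fun Y => G.redAdj X Y)).card = 0 := by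
  rw [card_eq_zero, filter_eq_empty_iff]
  intro Z hZ
  obtain ⟨a, ha, rfl⟩ := mem_image.mp hZ
  exact not_redAdj_singleton_right hA (mem_inter.mp ha).2 hXc

end Counting

lemma cnt_image_le {α : Type*} (s : Finset α) (f : α → Finset V) (p : Finset V → Prop) :
    ((s.image f).filter p).card ≤ s.card :=
  (card_filter_le _ _).trans card_image_le

lemma cnt_image_erase_le {α : Type*} [DecidableEq α] {s : Finset α} {f : α → Finset V}
    {p : Finset V → Prop} {X : Finset V} (hX : X ∈ s.image f) (hpX : ¬ p X) :
    ((s.image f).filter p).card + 1 ≤ s.card := by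
  have hsub : (s.image f).filter p ⊆ (s.image f).erase X := by
    intro Z hZ
    obtain ⟨hZ1, hZ2⟩ := mem_filter.mp hZ
    exact mem_erase.mpr ⟨fun h => hpX (h ▸ hZ2), hZ1⟩
  have h1 := card_le_card hsub
  rw [card_erase_of_mem hX] at h1
  have h2 : 0 < (s.image f).card := card_pos.mpr ⟨X, hX⟩
  have h3 : (s.image f).card ≤ s.card := card_image_le
  omega

lemma cnt_image_zero {α : Type*} {s : Finset α} {f : α → Finset V}
    {p : Finset V → Prop} (h : ∀ a ∈ s, ¬ p (f a)) :
    ((s.image f).filter p).card = 0 := by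
  rw [card_eq_zero, filter_eq_empty_iff]
  rintro Z hZ
  obtain ⟨a, ha, rfl⟩ := mem_image.mp hZ
  exact h a ha

namespace StageCtx

variable (c : StageCtx G A)

lemma respects_state (hA : ∀ a ∈ A, ∀ b, ¬ G.red a b) {T : Finset (Finset V)}
    (hT : T ⊆ c.tB ∩ c.tC) : G.Respects A (c.state T) := by
  constructor
  · intro a ha
    obtain ⟨E, hE, haE⟩ := c.hP.2.2 a
    by_cases hEB : E = c.B
    · exact mem_union_left _ (mem_union_right _
        (mem_image_of_mem _ (mem_inter.mpr ⟨mem_union_left _ (hEB ▸ haE), ha⟩)))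
    by_cases hEC : E = c.C
    · exact mem_union_left _ (mem_union_right _
        (mem_image_of_mem _ (mem_inter.mpr ⟨mem_union_right _ (hEC ▸ haE), ha⟩)))
    · refine mem_union_left _ (mem_union_left _ (mem_biUnion.mpr ⟨E, ?_, ?_⟩))
      · rw [Q_erase]
        exact mem_erase.mpr ⟨hEC, mem_erase.mpr ⟨hEB, hE⟩⟩
      · exact mem_union_left _ (mem_image_of_mem _ (mem_inter.mpr ⟨haE, ha⟩))
  · intro a ha
    rw [Trigraph.redDeg, card_eq_zero, filter_eq_empty_iff]
    intro Z hZ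
    exact not_redAdj_singleton_left hA ha (c.state_typConst hT hZ)

lemma redDeg_P_le {w : ℕ} (hwP : G.maxRedDeg c.P ≤ w) {E : Finset V} (hE : E ∈ c.P) :
    (c.P.filter (fun F => G.redAdj E F)).card ≤ w :=
  le_trans (Finset.le_sup (f := fun X => G.redDeg c.P X) hE) hwP

lemma redDeg_Q_le {w : ℕ} (hwQ : G.maxRedDeg c.Q ≤ w) {E : Finset V} (hE : E ∈ c.Q) :
    (c.Q.filter (fun F => G.redAdj E F)).card ≤ w :=
  le_trans (Finset.le_sup (f := fun X => G.redDeg c.Q X) hE) hwQ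

lemma B_notMem_Qerase : c.B ∉ c.Q.erase (c.B ∪ c.C) := by
  rw [Q_erase]
  intro h
  exact (notMem_erase c.B c.P) (mem_of_mem_erase h)

lemma C_notMem_Qerase : c.C ∉ c.Q.erase (c.B ∪ c.C) := by
  rw [Q_erase]
  exact notMem_erase _ _

lemma Qerase_subset_P : c.Q.erase (c.B ∪ c.C) ⊆ c.P := by
  rw [Q_erase]
  exact (erase_subset _ _).trans (erase_subset _ _)

end StageCtx

end TwwAux
namespace TwwAux

open Finset

variable {V : Type*} [Fintype V] {G : Trigraph V} {A : Finset V}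

namespace StageCtx

variable (c : StageCtx G A)

lemma state_eq_decomp (T : Finset (Finset V)) : c.state T =
    ((((c.Q.erase (c.B ∪ c.C)).biUnion (pieces G A)) ∪
      (((c.B ∪ c.C) ∩ A).image (fun a => ({a} : Finset V)))) ∪
      ((T.image (pt G A ((c.B ∪ c.C) \ A)) ∪ (c.tB \ T).image (pt G A (c.B \ A))) ∪
        (c.tC \ T).image (pt G A (c.C \ A)))) := by
  rw [state, stCore, stM]

lemma redDeg_state_decomp (T : Finset (Finset V)) (X : Finset V) :
    G.redDeg (c.state T) X ≤
      (((c.Q.erase (c.B ∪ c.C)).biUnion (pieces G A)).filter (fun Y => G.redAdj X Y)).card +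
      ((((c.B ∪ c.C) ∩ A).image (fun a => ({a} : Finset V))).filter (fun Y => G.redAdj X Y)).card +
      ((T.image (pt G A ((c.B ∪ c.C) \ A))).filter (fun Y => G.redAdj X Y)).card +
      (((c.tB \ T).image (pt G A (c.B \ A))).filter (fun Y => G.redAdj X Y)).card +
      (((c.tC \ T).image (pt G A (c.C \ A))).filter (fun Y => G.redAdj X Y)).card := by
  set p : Finset V → Prop := fun Y => G.redAdj X Y with hp
  have e0 : G.redDeg (c.state T) X = ((c.state T).filter p).card := rfl
  rw [e0, c.state_eq_decomp]
  have l1 := filter_union_card_le (((c.Q.erase (c.B ∪ c.C)).biUnion (pieces G A)) ∪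
      (((c.B ∪ c.C) ∩ A).image (fun a => ({a} : Finset V))))
      ((T.image (pt G A ((c.B ∪ c.C) \ A)) ∪ (c.tB \ T).image (pt G A (c.B \ A))) ∪
        (c.tC \ T).image (pt G A (c.C \ A))) p
  have l2 := filter_union_card_le ((c.Q.erase (c.B ∪ c.C)).biUnion (pieces G A))
      (((c.B ∪ c.C) ∩ A).image (fun a => ({a} : Finset V))) p
  have l3 := filter_union_card_le (T.image (pt G A ((c.B ∪ c.C) \ A)) ∪
      (c.tB \ T).image (pt G A (c.B \ A))) ((c.tC \ T).image (pt G A (c.C \ A))) p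
  have l4 := filter_union_card_le (T.image (pt G A ((c.B ∪ c.C) \ A)))
      ((c.tB \ T).image (pt G A (c.B \ A))) p
  linarith

section Width

variable (hA : ∀ a ∈ A, ∀ b, ¬ G.red a b) {w : ℕ}
  (hwP : G.maxRedDeg c.P ≤ w) (hwQ : G.maxRedDeg c.Q ≤ w)
  {T : Finset (Finset V)} (hT : T ⊆ c.tB ∩ c.tC)

include hA hT

include hwP hwQ in
lemma redDeg_state_cls {E₀ X : Finset V}
    (hE₀ : E₀ ∈ c.Q.erase (c.B ∪ c.C)) (hX : X ∈ cls G A (E₀ \ A)) :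
    G.redDeg (c.state T) X + 2 ≤ 2 ^ A.card * w + 2 ^ (A.card + 1) := by
  obtain ⟨hE₀P, hE₀B, hE₀C⟩ := c.mem_Q_erase hE₀
  have hE₀Q : E₀ ∈ c.Q := mem_of_mem_erase hE₀
  have hE₀BC : E₀ ≠ c.B ∪ c.C := ne_of_mem_erase hE₀
  have hXc : TypConst G A X := typConst_of_mem_cls hX
  have hXE : X ⊆ E₀ := (cls_subset_mem hX).trans sdiff_subset
  set s : Finset (Finset V) := (c.Q.erase (c.B ∪ c.C)).erase E₀ with hs
  have hbi : (c.Q.erase (c.B ∪ c.C)).biUnion (pieces G A) =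
      pieces G A E₀ ∪ s.biUnion (pieces G A) := by
    conv_lhs => rw [← insert_erase hE₀]
    rw [biUnion_insert]
  have hdec := c.redDeg_state_decomp T X
  rw [hbi] at hdec
  have hsplit := filter_union_card_le (pieces G A E₀) (s.biUnion (pieces G A)) (fun Y => G.redAdj X Y)
  have hbc0 := cnt_singles_eq_zero hA hXc (c.B ∪ c.C)
  have hown : ((pieces G A E₀).filter (fun Y => G.redAdj X Y)).card + 1 ≤ 2 ^ A.card := by
    have hsub : (pieces G A E₀).filter (fun Y => G.redAdj X Y) ⊆ (cls G A (E₀ \ A)).erase X := by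
      intro Z hZ
      obtain ⟨hZp, hZa⟩ := mem_filter.mp hZ
      rcases mem_union.mp hZp with h | h
      · obtain ⟨a, ha, rfl⟩ := mem_image.mp h
        exact absurd hZa (not_redAdj_singleton_right hA (mem_inter.mp ha).2 hXc)
      · exact mem_erase.mpr ⟨fun hEq => not_redAdj_self (hEq ▸ hZa), h⟩
    have h1 := card_le_card hsub
    rw [card_erase_of_mem hX] at h1
    have h2 : 0 < (cls G A (E₀ \ A)).card := card_pos.mpr ⟨X, hX⟩
    have h3 := card_cls_le (G := G) (A := A) (E₀ \ A)
    omega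
  have hrest : ((s.biUnion (pieces G A)).filter (fun Y => G.redAdj X Y)).card ≤
      2 ^ A.card * (s.filter (fun F => G.redAdj E₀ F)).card :=
    cnt_biUnion_le hA hXc hXE (notMem_erase _ _)
  set k := (s.filter (fun F => G.redAdj E₀ F)).card with hk
  have hq1 : 1 ≤ 2 ^ A.card := Nat.one_le_two_pow
  have hpow : (2:ℕ) ^ (A.card + 1) = 2 ^ A.card * 2 := pow_succ 2 A.card
  by_cases hBCadj : G.redAdj E₀ (c.B ∪ c.C)
  case neg =>
    have hMT0 : ((T.image (pt G A ((c.B ∪ c.C) \ A))).filter (fun Y => G.redAdj X Y)).card = 0 :=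
      cnt_image_zero fun a _ hadj => hBCadj (redAdj_mono hXE
        (pt_subset.trans sdiff_subset) hE₀BC hadj)
    have hMB0 : (((c.tB \ T).image (pt G A (c.B \ A))).filter (fun Y => G.redAdj X Y)).card = 0 :=
      cnt_image_zero fun a _ hadj => hBCadj (redAdj_mono hXE
        (c.Bpart_sub.trans subset_union_left) hE₀BC hadj)
    have hMC0 : (((c.tC \ T).image (pt G A (c.C \ A))).filter (fun Y => G.redAdj X Y)).card = 0 :=
      cnt_image_zero fun a _ hadj => hBCadj (redAdj_mono hXE
        (c.Cpart_sub.trans subset_union_right) hE₀BC hadj)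
    have hkw : k ≤ w := by
      refine le_trans (card_le_card ?_) (c.redDeg_Q_le hwQ hE₀Q)
      exact (filter_subset_filter _ ((erase_subset _ _).trans (erase_subset _ _)))
    have hmul : 2 ^ A.card * k ≤ 2 ^ A.card * w := Nat.mul_le_mul_left _ hkw
    linarith
  case pos =>
    have hcT : ((T.image (pt G A ((c.B ∪ c.C) \ A))).filter (fun Y => G.redAdj X Y)).card ≤ T.card :=
      cnt_image_le _ _ _
    have hTB : T ⊆ c.tB := hT.trans inter_subset_left
    have hTC : T ⊆ c.tC := hT.trans inter_subset_right
    have htBcard : (c.tB \ T).card + T.card = c.tB.card := card_sdiff_add_card_eq_card hTB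
    have htCcard : (c.tC \ T).card + T.card = c.tC.card := card_sdiff_add_card_eq_card hTC
    have htBle : c.tB.card ≤ 2 ^ A.card := card_typImage_le _
    have htCle : c.tC.card ≤ 2 ^ A.card := card_typImage_le _
    by_cases hrB : G.redAdj E₀ c.B
    · by_cases hrC : G.redAdj E₀ c.C
      · have hkP : k + 2 ≤ w := by
          have hsubs : s ⊆ c.P := (erase_subset _ _).trans c.Qerase_subset_P
          have hsub : insert c.B (insert c.C (s.filter (fun F => G.redAdj E₀ F))) ⊆
              c.P.filter (fun F => G.redAdj E₀ F) :=
            insert_subset (mem_filter.mpr ⟨c.hB, hrB⟩) (insert_subset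
              (mem_filter.mpr ⟨c.hC, hrC⟩) (filter_subset_filter _ hsubs))
          have hCnm : c.C ∉ s.filter (fun F => G.redAdj E₀ F) := fun h =>
            c.C_notMem_Qerase (mem_of_mem_erase (mem_filter.mp h).1)
          have hBnm : c.B ∉ insert c.C (s.filter (fun F => G.redAdj E₀ F)) := by
            intro h
            rcases mem_insert.mp h with h | h
            · exact c.hBC h
            · exact c.B_notMem_Qerase (mem_of_mem_erase (mem_filter.mp h).1)
          have hcard := card_le_card hsub
          rw [card_insert_of_notMem hBnm, card_insert_of_notMem hCnm] at hcard
          exact le_trans hcard (c.redDeg_P_le hwP hE₀P)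
        have hcB : (((c.tB \ T).image (pt G A (c.B \ A))).filter (fun Y => G.redAdj X Y)).card ≤
            (c.tB \ T).card := cnt_image_le _ _ _
        have hcC : (((c.tC \ T).image (pt G A (c.C \ A))).filter (fun Y => G.redAdj X Y)).card ≤
            (c.tC \ T).card := cnt_image_le _ _ _
        have hmul : 2 ^ A.card * k + 2 ^ A.card * 2 ≤ 2 ^ A.card * w := by
          have h5 := Nat.mul_le_mul_left (2 ^ A.card) hkP
          rw [mul_add] at h5
          exact h5
        linarith
      · have hkQ : k + 1 ≤ w := by
          have hsub : insert (c.B ∪ c.C) (s.filter (fun F => G.redAdj E₀ F)) ⊆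
              c.Q.filter (fun F => G.redAdj E₀ F) :=
            insert_subset (mem_filter.mpr ⟨c.unionBC_mem_Q, hBCadj⟩)
              (filter_subset_filter _ ((erase_subset _ _).trans (erase_subset _ _)))
          have hnm : (c.B ∪ c.C) ∉ s.filter (fun F => G.redAdj E₀ F) := fun h =>
            (notMem_erase _ _) (mem_of_mem_erase (mem_filter.mp h).1)
          have hcard := card_le_card hsub
          rw [card_insert_of_notMem hnm] at hcard
          exact le_trans hcard (c.redDeg_Q_le hwQ hE₀Q)
        have hcC : (((c.tC \ T).image (pt G A (c.C \ A))).filter (fun Y => G.redAdj X Y)).card = 0 :=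
          cnt_image_zero fun a _ hadj => hrC (redAdj_mono hXE c.Cpart_sub hE₀C hadj)
        have hcB : (((c.tB \ T).image (pt G A (c.B \ A))).filter (fun Y => G.redAdj X Y)).card ≤
            (c.tB \ T).card := cnt_image_le _ _ _
        have hmul : 2 ^ A.card * k + 2 ^ A.card ≤ 2 ^ A.card * w := by
          have h5 := Nat.mul_le_mul_left (2 ^ A.card) hkQ
          rw [mul_add, mul_one] at h5
          exact h5
        linarith
    · have hkQ : k + 1 ≤ w := by
        have hsub : insert (c.B ∪ c.C) (s.filter (fun F => G.redAdj E₀ F)) ⊆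
            c.Q.filter (fun F => G.redAdj E₀ F) :=
          insert_subset (mem_filter.mpr ⟨c.unionBC_mem_Q, hBCadj⟩)
            (filter_subset_filter _ ((erase_subset _ _).trans (erase_subset _ _)))
        have hnm : (c.B ∪ c.C) ∉ s.filter (fun F => G.redAdj E₀ F) := fun h =>
          (notMem_erase _ _) (mem_of_mem_erase (mem_filter.mp h).1)
        have hcard := card_le_card hsub
        rw [card_insert_of_notMem hnm] at hcard
        exact le_trans hcard (c.redDeg_Q_le hwQ hE₀Q)
      have hcB : (((c.tB \ T).image (pt G A (c.B \ A))).filter (fun Y => G.redAdj X Y)).card = 0 :=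
        cnt_image_zero fun a _ hadj => hrB (redAdj_mono hXE c.Bpart_sub hE₀B hadj)
      have hcC : (((c.tC \ T).image (pt G A (c.C \ A))).filter (fun Y => G.redAdj X Y)).card ≤
          (c.tC \ T).card := cnt_image_le _ _ _
      have hmul : 2 ^ A.card * k + 2 ^ A.card ≤ 2 ^ A.card * w := by
        have h5 := Nat.mul_le_mul_left (2 ^ A.card) hkQ
        rw [mul_add, mul_one] at h5
        exact h5
      linarith

include hwQ in
lemma redDeg_state_MT {t : Finset V} (ht : t ∈ T) :
    G.redDeg (c.state T) (pt G A ((c.B ∪ c.C) \ A) t) + 2 ≤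
      2 ^ A.card * w + 2 ^ (A.card + 1) := by
  set X := pt G A ((c.B ∪ c.C) \ A) t with hX
  have hXc : TypConst G A X := typConst_pt
  have hXE : X ⊆ c.B ∪ c.C := pt_subset.trans sdiff_subset
  have hdec := c.redDeg_state_decomp T X
  have hcore : (((c.Q.erase (c.B ∪ c.C)).biUnion (pieces G A)).filter (fun Y => G.redAdj X Y)).card ≤
      2 ^ A.card * ((c.Q.erase (c.B ∪ c.C)).filter
        (fun F => G.redAdj (c.B ∪ c.C) F)).card :=
    cnt_biUnion_le hA hXc hXE (notMem_erase _ _)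
  set k := ((c.Q.erase (c.B ∪ c.C)).filter (fun F => G.redAdj (c.B ∪ c.C) F)).card with hk
  have hkw : k ≤ w := le_trans (card_le_card (filter_subset_filter _ (erase_subset _ _)))
    (c.redDeg_Q_le hwQ c.unionBC_mem_Q)
  have hbc0 := cnt_singles_eq_zero hA hXc (c.B ∪ c.C)
  have hMT : ((T.image (pt G A ((c.B ∪ c.C) \ A))).filter (fun Y => G.redAdj X Y)).card + 1 ≤ T.card :=
    cnt_image_erase_le (mem_image_of_mem _ ht) not_redAdj_self
  have hMB : (((c.tB \ T).image (pt G A (c.B \ A))).filter (fun Y => G.redAdj X Y)).card ≤ (c.tB \ T).card :=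
    cnt_image_le _ _ _
  have hMC : (((c.tC \ T).image (pt G A (c.C \ A))).filter (fun Y => G.redAdj X Y)).card ≤ (c.tC \ T).card :=
    cnt_image_le _ _ _
  have htBcard : (c.tB \ T).card + T.card = c.tB.card :=
    card_sdiff_add_card_eq_card (hT.trans inter_subset_left)
  have htCcard : (c.tC \ T).card + T.card = c.tC.card :=
    card_sdiff_add_card_eq_card (hT.trans inter_subset_right)
  have htBle : c.tB.card ≤ 2 ^ A.card := card_typImage_le _
  have htCle : c.tC.card ≤ 2 ^ A.card := card_typImage_le _
  have hTpos : 1 ≤ T.card := card_pos.mpr ⟨t, ht⟩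
  have hq1 : 1 ≤ 2 ^ A.card := Nat.one_le_two_pow
  have hpow : (2:ℕ) ^ (A.card + 1) = 2 ^ A.card * 2 := pow_succ 2 A.card
  have hmul : 2 ^ A.card * k ≤ 2 ^ A.card * w := Nat.mul_le_mul_left _ hkw
  linarith

include hwP hwQ in
lemma redDeg_state_MB {t : Finset V} (ht : t ∈ c.tB \ T) :
    G.redDeg (c.state T) (pt G A (c.B \ A) t) + 2 ≤
      2 ^ A.card * w + 2 ^ (A.card + 1) := by
  set X := pt G A (c.B \ A) t with hX
  have hXc : TypConst G A X := typConst_pt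
  have hXB : X ⊆ c.B := c.Bpart_sub
  have hdec := c.redDeg_state_decomp T X
  have hcore : (((c.Q.erase (c.B ∪ c.C)).biUnion (pieces G A)).filter (fun Y => G.redAdj X Y)).card ≤
      2 ^ A.card * ((c.Q.erase (c.B ∪ c.C)).filter (fun F => G.redAdj c.B F)).card :=
    cnt_biUnion_le hA hXc hXB c.B_notMem_Qerase
  set k := ((c.Q.erase (c.B ∪ c.C)).filter (fun F => G.redAdj c.B F)).card with hk
  have hbc0 := cnt_singles_eq_zero hA hXc (c.B ∪ c.C)
  have hMT : ((T.image (pt G A ((c.B ∪ c.C) \ A))).filter (fun Y => G.redAdj X Y)).card ≤ T.card :=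
    cnt_image_le _ _ _
  have hMB : (((c.tB \ T).image (pt G A (c.B \ A))).filter (fun Y => G.redAdj X Y)).card + 1 ≤ (c.tB \ T).card :=
    cnt_image_erase_le (mem_image_of_mem _ ht) not_redAdj_self
  have htBcard : (c.tB \ T).card + T.card = c.tB.card :=
    card_sdiff_add_card_eq_card (hT.trans inter_subset_left)
  have htCcard : (c.tC \ T).card + T.card = c.tC.card :=
    card_sdiff_add_card_eq_card (hT.trans inter_subset_right)
  have htBle : c.tB.card ≤ 2 ^ A.card := card_typImage_le _
  have htCle : c.tC.card ≤ 2 ^ A.card := card_typImage_le _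
  have hq1 : 1 ≤ 2 ^ A.card := Nat.one_le_two_pow
  have hpow : (2:ℕ) ^ (A.card + 1) = 2 ^ A.card * 2 := pow_succ 2 A.card
  by_cases hrC : G.redAdj c.B c.C
  · have hMC : (((c.tC \ T).image (pt G A (c.C \ A))).filter (fun Y => G.redAdj X Y)).card ≤ (c.tC \ T).card :=
      cnt_image_le _ _ _
    have hkP : k + 1 ≤ w := by
      have hsub : insert c.C ((c.Q.erase (c.B ∪ c.C)).filter (fun F => G.redAdj c.B F)) ⊆
          c.P.filter (fun F => G.redAdj c.B F) :=
        insert_subset (mem_filter.mpr ⟨c.hC, hrC⟩)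
          (filter_subset_filter _ c.Qerase_subset_P)
      have hnm : c.C ∉ (c.Q.erase (c.B ∪ c.C)).filter (fun F => G.redAdj c.B F) :=
        fun h => c.C_notMem_Qerase (mem_filter.mp h).1
      have hcard := card_le_card hsub
      rw [card_insert_of_notMem hnm] at hcard
      exact le_trans hcard (c.redDeg_P_le hwP c.hB)
    have hmul : 2 ^ A.card * k + 2 ^ A.card ≤ 2 ^ A.card * w := by
      have h5 := Nat.mul_le_mul_left (2 ^ A.card) hkP
      rw [mul_add, mul_one] at h5
      exact h5
    linarith
  · have hMC : (((c.tC \ T).image (pt G A (c.C \ A))).filter (fun Y => G.redAdj X Y)).card = 0 :=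
      cnt_image_zero fun a _ hadj => hrC (redAdj_mono hXB c.Cpart_sub c.hBC hadj)
    have hkw : k ≤ w := le_trans (card_le_card (filter_subset_filter _ c.Qerase_subset_P))
      (c.redDeg_P_le hwP c.hB)
    have hmul : 2 ^ A.card * k ≤ 2 ^ A.card * w := Nat.mul_le_mul_left _ hkw
    linarith

include hwP hwQ in
lemma maxRedDeg_state :
    G.maxRedDeg (c.state T) ≤ 2 ^ A.card * w + 2 ^ (A.card + 1) - 2 := by
  refine Finset.sup_le fun X hX => ?_
  refine Nat.le_sub_of_add_le ?_
  rcases mem_union.mp hX with hc | hm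
  · rcases c.core_shape hc with ⟨a, ha, rfl⟩ | ⟨E₀, hE₀, hXc⟩
    · have h0 : G.redDeg (c.state T) {a} = 0 := (c.respects_state hA hT).2 a ha
      rw [h0]
      have h2 : (2:ℕ) ≤ 2 ^ (A.card + 1) := by
        have := Nat.pow_le_pow_right (show 1 ≤ 2 by norm_num) (show 1 ≤ A.card + 1 by omega)
        simpa using this
      omega
    · exact c.redDeg_state_cls hA hwP hwQ hT hE₀ hXc
  · rcases c.stM_shape hT hm with ⟨t, ht, rfl⟩ | ⟨t, ht, rfl⟩ | ⟨t, ht, rfl⟩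
    · exact c.redDeg_state_MT hA hwQ hT ht
    · exact c.redDeg_state_MB hA hwP hwQ hT ht
    · have hT2 : T ⊆ c.swap.tB ∩ c.swap.tC := by
        rw [swap_tB, swap_tC, inter_comm]
        exact hT
      have ht2 : t ∈ c.swap.tB \ T := by
        rw [swap_tB]
        exact ht
      have hwQ2 : G.maxRedDeg c.swap.Q ≤ w := by
        rw [swap_Q]
        exact hwQ
      have hres := c.swap.redDeg_state_MB hA hwP hwQ2 hT2 ht2
      rw [swap_state, swap_B] at hres
      exact hres

end Width

end StageCtx

end TwwAux
namespace TwwAux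

open Finset

variable {V : Type*} [Fintype V] {G : Trigraph V} {A : Finset V}

namespace StageCtx

variable (c : StageCtx G A)

lemma stage_reaches (hA : ∀ a ∈ A, ∀ b, ¬ G.red a b) {w : ℕ}
    (hwP : G.maxRedDeg c.P ≤ w) (hwQ : G.maxRedDeg c.Q ≤ w) :
    Relation.ReflTransGen (Step G A (2 ^ A.card * w + 2 ^ (A.card + 1) - 2))
      (refn G A c.P) (refn G A c.Q) := by
  suffices h : ∀ (k : ℕ) (T : Finset (Finset V)), T ⊆ c.tB ∩ c.tC →
      ((c.tB ∩ c.tC) \ T).card = k →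
      Relation.ReflTransGen (Step G A (2 ^ A.card * w + 2 ^ (A.card + 1) - 2))
        (c.state T) (c.state (c.tB ∩ c.tC)) by
    have h2 := h ((c.tB ∩ c.tC) \ ∅).card ∅ (empty_subset _) rfl
    rw [c.state_empty, c.state_full] at h2
    exact h2
  intro k
  induction k with
  | zero =>
    intro T hT hc
    have : c.tB ∩ c.tC ⊆ T := sdiff_eq_empty_iff_subset.mp (card_eq_zero.mp hc)
    rw [subset_antisymm hT this]
  | succ n ih =>
    intro T hT hc
    have hne : ((c.tB ∩ c.tC) \ T).Nonempty := card_pos.mp (by omega)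
    obtain ⟨t, ht⟩ := hne
    have hT' : insert t T ⊆ c.tB ∩ c.tC := insert_subset (mem_sdiff.mp ht).1 hT
    refine Relation.ReflTransGen.head ?_ (ih (insert t T) hT' ?_)
    · exact ⟨c.state_merge hT ht, c.maxRedDeg_state hA hwP hwQ hT',
        c.respects_state hA hT'⟩
    · rw [sdiff_insert, card_erase_of_mem ht, hc]
      omega

end StageCtx

lemma pieces_singleton (v : V) : pieces G A {v} = {({v} : Finset V)} := by
  by_cases hv : v ∈ A
  · rw [pieces, singleton_inter_of_mem hv, image_singleton,
      sdiff_eq_empty_iff_subset.mpr (singleton_subset_iff.mpr hv)]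
    have : cls G A (∅ : Finset V) = ∅ := by
      rw [cls, image_empty, image_empty]
    rw [this, union_empty]
  · rw [pieces, singleton_inter_of_notMem hv,
      Finset.sdiff_eq_self_iff_disjoint.mpr (disjoint_singleton_left.mpr hv), image_empty]
    have h1 : cls G A ({v} : Finset V) = {({v} : Finset V)} := by
      rw [cls, image_singleton, image_singleton, pt,
        filter_true_of_mem (fun u hu => by rw [mem_singleton.mp hu])]
    rw [h1, empty_union]

lemma refn_discrete : refn G A (discretePart V) = discretePart V := by
  ext Z
  simp only [refn, mem_biUnion, discretePart, mem_image]
  constructor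
  · rintro ⟨Y, ⟨v, -, rfl⟩, hZ⟩
    rw [pieces_singleton] at hZ
    exact ⟨v, mem_univ v, (mem_singleton.mp hZ).symm⟩
  · rintro ⟨v, -, rfl⟩
    refine ⟨{v}, ⟨v, mem_univ v, rfl⟩, ?_⟩
    rw [pieces_singleton]
    exact mem_singleton_self _

lemma respects_discrete (hA : ∀ a ∈ A, ∀ b, ¬ G.red a b) :
    G.Respects A (discretePart V) := by
  constructor
  · intro a _
    exact mem_image.mpr ⟨a, mem_univ a, rfl⟩
  · intro a ha
    rw [Trigraph.redDeg, card_eq_zero, filter_eq_empty_iff]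
    intro Z hZ
    obtain ⟨v, -, rfl⟩ := mem_image.mp hZ
    exact not_redAdj_singleton_left hA ha typConst_singleton

lemma typ_subset (v : V) : typ G A v ⊆ A := filter_subset _ _

lemma exists_black_iff (hA : ∀ a ∈ A, ∀ b, ¬ G.red a b) {D s : Finset V} {a : V}
    (hs : s ∈ D.image (typ G A)) (ha : a ∈ A) :
    (∃ b ∈ pt G A D s, G.black b a) ↔ a ∈ s := by
  constructor
  · rintro ⟨b, hb, hbl⟩
    exact typ_eq_of_mem_pt hb ▸ (black_iff_mem_typ hA ha).mp hbl
  · intro has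
    obtain ⟨b, hb⟩ := pt_nonempty hs
    refine ⟨b, hb, (black_iff_mem_typ hA ha).mpr ?_⟩
    rw [typ_eq_of_mem_pt hb]
    exact has

lemma completeFor_refn_univ (hA : ∀ a ∈ A, ∀ b, ¬ G.red a b) :
    G.CompleteFor A (refn G A {Finset.univ}) := by
  intro B' hB' C' hC' hne hdB hdC hall
  rw [refn, singleton_biUnion] at hB' hC'
  have hshape : ∀ Z : Finset V, Z ∈ pieces G A Finset.univ → Disjoint Z A →
      ∃ s ∈ (Finset.univ \ A).image (typ G A), Z = pt G A (Finset.univ \ A) s := by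
    intro Z hZ hd
    rcases mem_union.mp hZ with h | h
    · obtain ⟨a, ha, rfl⟩ := mem_image.mp h
      exact absurd (mem_inter.mp ha).2 (disjoint_singleton_left.mp hd)
    · exact mem_cls.mp h
  obtain ⟨s, hs, rfl⟩ := hshape B' hB' hdB
  obtain ⟨s', hs', rfl⟩ := hshape C' hC' hdC
  have hss : s ≠ s' := fun h => hne (h ▸ rfl)
  have hsubs : s ⊆ A := by
    obtain ⟨v, -, rfl⟩ := mem_image.mp hs
    exact typ_subset v
  have hsubs' : s' ⊆ A := by
    obtain ⟨v, -, rfl⟩ := mem_image.mp hs'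
    exact typ_subset v
  have : ∃ a, (a ∈ s ∧ a ∉ s') ∨ (a ∈ s' ∧ a ∉ s) := by
    by_contra hcon
    push_neg at hcon
    exact hss (subset_antisymm (fun a ha => by
        rcases (hcon a).1 ha with h; exact h)
      (fun a ha => by rcases (hcon a).2 ha with h; exact h))
  obtain ⟨a, ha⟩ := this
  rcases ha with ⟨h1, h2⟩ | ⟨h1, h2⟩
  · have := (hall a (hsubs h1)).mp ((exists_black_iff hA hs (hsubs h1)).mpr h1)
    exact h2 ((exists_black_iff hA hs' (hsubs h1)).mp this)
  · have := (hall a (hsubs' h1)).mpr ((exists_black_iff hA hs' (hsubs' h1)).mpr h1)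
    exact h2 ((exists_black_iff hA hs (hsubs' h1)).mp this)

lemma main_chain (hA : ∀ a ∈ A, ∀ b, ¬ G.red a b) {w len : ℕ}
    {f : ℕ → Finset (Finset V)} (hf0 : f 0 = discretePart V)
    (hm : ∀ i < len, MergeStep (f i) (f (i + 1)))
    (hw : ∀ i ≤ len, G.maxRedDeg (f i) ≤ w) :
    ∀ i ≤ len, IsPartition (f i) ∧
      Relation.ReflTransGen (Step G A (2 ^ A.card * w + 2 ^ (A.card + 1) - 2))
        (discretePart V) (refn G A (f i)) := by
  intro i
  induction i with
  | zero =>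
    intro _
    rw [hf0]
    refine ⟨isPartition_discrete, ?_⟩
    rw [refn_discrete]
  | succ n ih =>
    intro hle
    obtain ⟨hpart, hchain⟩ := ih (by omega)
    obtain ⟨B, hB, C, hC, hBC, hQeq⟩ := hm n (by omega)
    set c : StageCtx G A := ⟨f n, B, C, hpart, hB, hC, hBC⟩ with hc
    have hcQ : c.Q = f (n + 1) := by
      rw [StageCtx.Q]
      exact hQeq.symm
    constructor
    · rw [← hcQ]
      exact c.isPartition_Q
    · refine hchain.trans ?_
      have hstage := c.stage_reaches hA (hw n (by omega)) (by rw [hcQ]; exact hw (n+1) hle)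
      rw [hcQ] at hstage
      exact hstage

end TwwAux
open Finset TwwAux in
/-- `tww(G, A) ≤ 2 ^ |A| ⬝ tww(G) + 2 ^ (|A| + 1) − 2` whenever all
vertices of `A` have red degree 0 in `G`. -/
theorem twwR_le {V : Type*} [Fintype V] (G : Trigraph V) (A : Finset V)
    (hA : ∀ a ∈ A, ∀ b, ¬ G.red a b) :
    G.twwR A ≤ 2 ^ A.card * G.tww + 2 ^ (A.card + 1) - 2 := by
  rcases isEmpty_or_nonempty V with hV | hV
  · haveI := hV
    have hA0 : A = ∅ := Finset.eq_empty_of_isEmpty A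
    have hd : discretePart V = (∅ : Finset (Finset V)) := by
      rw [discretePart, Finset.univ_eq_empty, Finset.image_empty]
    refine Nat.sInf_le ⟨0, fun _ => discretePart V, ⟨rfl, fun i hi => absurd hi (by omega)⟩,
      ?_, ?_, ?_⟩
    · intro i _
      subst hA0
      exact ⟨fun a ha => absurd ha (Finset.notMem_empty a),
        fun a ha => absurd ha (Finset.notMem_empty a)⟩
    · intro B hB
      rw [hd] at hB
      exact absurd hB (Finset.notMem_empty B)
    · intro i _
      rw [hd]
      simp [Trigraph.maxRedDeg]
  · haveI := hV
    have hne := tww_set_nonempty (G := G)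
    have hmem := Nat.sInf_mem hne
    obtain ⟨f, ⟨hf0, hm⟩, hfl, hw⟩ := hmem
    obtain ⟨-, hchain⟩ := main_chain (G := G) (A := A) hA hf0 hm hw
      (Fintype.card V - 1) le_rfl
    have hcomp : G.CompleteFor A (refn G A (f (Fintype.card V - 1))) := by
      rw [hfl]
      exact completeFor_refn_univ hA
    refine twwR_le_of_chain hchain ?_ (respects_discrete hA) hcomp
    have h0 := hw 0 (Nat.zero_le _)
    rw [hf0] at h0
    refine h0.trans ?_
    have h2 : G.tww ≤ 2 ^ A.card * G.tww := Nat.le_mul_of_pos_left _ (Nat.two_pow_pos _)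
    have h3 : (2:ℕ) ≤ 2 ^ (A.card + 1) := by
      have := Nat.pow_le_pow_right (show 1 ≤ 2 by norm_num)
        (Nat.succ_le_succ (Nat.zero_le A.card))
      simpa using this
    show G.tww ≤ 2 ^ A.card * G.tww + 2 ^ (A.card + 1) - 2
    exact Nat.le_sub_of_add_le (add_le_add h2 h3)
end
end

section
/- Let G be a trigraph, v a vertex of G with red degree 0, and A ⊆ V(G)∖{v}. Then tww(G, A∪{v}) ≤ 2·tww(G−v, A) + 2. -/
open scoped Classical

noncomputable section

variable {V : Type*}

/-!
Take an optimal complete sequence `Q₀, …, Qₗ` of `G - v` respecting `A` and lift it to `G`: split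
every part of `Qᵢ` into the black neighbours and the non-neighbours of `v`, and add the part `{v}`.
A merge `P → Q` of `G - v` becomes at most two merges, first of the neighbour halves, then of the
other halves. Every part is homogeneous to `v`, which has no red edges, so `{v}` keeps red degree
`0`. A part inside `D ∈ Q` can only be red to parts inside `D` or inside one of the at most `d` red
neighbours of `D`; each of these holds at most two parts, except the freshly merged part, which
holds three at the halfway point. Hence red degrees stay at most `2 (d + 1) + 1 - 1 = 2 d + 2`.
Parts with the same neighbourhood in `A ∪ {v}` lie on the same side of `v`, so completeness is
inherited from `Qₗ`.

`twwR` is an infimum of a possibly empty set of naturals, hence `0` when no sequence respects the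
set. On the left this happens when a vertex of `A` has a red edge; otherwise contracting the twin
classes over `A` gives a complete sequence of `G - v` respecting `A`, so the infimum on the right
is attained.
-/

open Finset Relation

/-! ### Partitions and merge sequences -/

structure IsPartition (P : Finset (Finset V)) : Prop where
  nonempty : ∀ X ∈ P, X.Nonempty
  disjoint : ∀ X ∈ P, ∀ Y ∈ P, X ≠ Y → Disjoint X Y
  cover : ∀ u, ∃ X ∈ P, u ∈ X

def Refines (P R : Finset (Finset V)) : Prop :=
  ∀ X ∈ P, ∃ Y ∈ R, X ⊆ Y

theorem IsPartition.eq_of_mem_of_mem {P : Finset (Finset V)} (hP : IsPartition P)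
    {X Y : Finset V} (hX : X ∈ P) (hY : Y ∈ P) {u : V} (huX : u ∈ X) (huY : u ∈ Y) : X = Y :=
  by_contra fun h => disjoint_left.1 (hP.disjoint X hX Y hY h) huX huY

theorem isPartition_discretePart [Fintype V] : IsPartition (discretePart V) where
  nonempty := by simp [discretePart]
  disjoint := by simp [discretePart, eq_comm]
  cover u := ⟨{u}, by simp [discretePart]⟩

theorem mem_merge {P : Finset (Finset V)} {B C X : Finset V} :
    X ∈ insert (B ∪ C) ((P.erase B).erase C) ↔ X = B ∪ C ∨ (X ∈ P ∧ X ≠ B ∧ X ≠ C) := by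
  simp only [mem_insert, mem_erase]
  tauto

namespace MergeStep

variable {P Q : Finset (Finset V)}

theorem isPartition (h : MergeStep P Q) (hP : IsPartition P) : IsPartition Q := by
  obtain ⟨B, hB, C, hC, hBC, rfl⟩ := h
  have hsep : ∀ X ∈ P, X ≠ B → X ≠ C → Disjoint X (B ∪ C) := fun X hX hXB hXC =>
    disjoint_union_right.2 ⟨hP.disjoint X hX B hB hXB, hP.disjoint X hX C hC hXC⟩
  refine ⟨fun X hX => ?_, fun X hX Y hY hXY => ?_, fun u => ?_⟩
  · rcases mem_merge.1 hX with rfl | ⟨hX, -⟩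
    exacts [(hP.nonempty B hB).mono subset_union_left, hP.nonempty X hX]
  · rcases mem_merge.1 hX with rfl | ⟨hX, hXB, hXC⟩ <;>
      rcases mem_merge.1 hY with rfl | ⟨hY, hYB, hYC⟩
    exacts [absurd rfl hXY, (hsep Y hY hYB hYC).symm, hsep X hX hXB hXC, hP.disjoint X hX Y hY hXY]
  · obtain ⟨X, hX, huX⟩ := hP.cover u
    by_cases hXBC : X = B ∨ X = C
    · refine ⟨B ∪ C, mem_insert_self _ _, ?_⟩
      rcases hXBC with rfl | rfl <;> simp [huX]
    · exact ⟨X, mem_merge.2 (Or.inr ⟨hX, not_or.1 hXBC⟩), huX⟩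

theorem refines (h : MergeStep P Q) : Refines P Q := by
  obtain ⟨B, hB, C, hC, hBC, rfl⟩ := h
  intro X hX
  by_cases hXBC : X = B ∨ X = C
  · refine ⟨B ∪ C, mem_insert_self _ _, ?_⟩
    rcases hXBC with rfl | rfl
    exacts [subset_union_left, subset_union_right]
  · exact ⟨X, mem_merge.2 (Or.inr ⟨hX, not_or.1 hXBC⟩), subset_rfl⟩

theorem card_lt (h : MergeStep P Q) : #Q < #P := by
  obtain ⟨B, hB, C, hC, hBC, rfl⟩ := h
  have h2 : 1 < #P := one_lt_card.2 ⟨B, hB, C, hC, hBC⟩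
  have := card_insert_le (B ∪ C) ((P.erase B).erase C)
  rw [card_erase_of_mem (mem_erase.2 ⟨hBC.symm, hC⟩), card_erase_of_mem hB] at this
  omega

theorem union_right {R : Finset (Finset V)} (h : MergeStep P Q) (hPR : Disjoint P R) :
    MergeStep (P ∪ R) (Q ∪ R) := by
  obtain ⟨B, hB, C, hC, hBC, rfl⟩ := h
  refine ⟨B, mem_union_left _ hB, C, mem_union_left _ hC, hBC, ?_⟩
  have hBR := disjoint_left.1 hPR hB
  have hCR := disjoint_left.1 hPR hC
  ext X
  simp only [mem_union, mem_merge]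
  grind

end MergeStep

theorem IsCSeq.isPartition [Fintype V] {len : ℕ} {f : ℕ → Finset (Finset V)}
    (h : IsCSeq V len f) : ∀ i ≤ len, IsPartition (f i)
  | 0, _ => h.1 ▸ isPartition_discretePart
  | i + 1, hi => (h.2 i hi).isPartition (h.isPartition i (by omega))

theorem exists_isCSeq_of_reflTransGen [Fintype V] {p : Finset (Finset V) → Prop}
    {R : Finset (Finset V)} (h0 : p (discretePart V))
    (h : ReflTransGen (fun P Q => MergeStep P Q ∧ p Q) (discretePart V) R) :
    ∃ len f, IsCSeq V len f ∧ f len = R ∧ ∀ i ≤ len, p (f i) := by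
  induction h with
  | refl => exact ⟨0, fun _ => discretePart V, ⟨rfl, by simp⟩, rfl, fun _ _ => h0⟩
  | @tail P Q _ hPQ ih =>
    obtain ⟨len, f, ⟨hf0, hf⟩, hflen, hfp⟩ := ih
    refine ⟨len + 1, fun i => if i ≤ len then f i else Q, ⟨by simpa using hf0, fun i hi => ?_⟩,
      by simp, fun i hi => ?_⟩
    · rcases Nat.lt_or_eq_of_le (Nat.lt_succ_iff.1 hi) with hi | rfl
      · simpa [hi.le, Nat.succ_le_of_lt hi] using hf i hi
      · simpa [hflen] using hPQ.1
    · by_cases hil : i ≤ len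
      · simpa [hil] using hfp i hil
      · simpa [hil] using hPQ.2

def partsMeeting (P : Finset (Finset V)) (D : Finset V) : Finset (Finset V) :=
  P.filter fun C => ¬ Disjoint C D

theorem IsPartition.card_partsMeeting_le_one {P : Finset (Finset V)} (hP : IsPartition P)
    {D : Finset V} (hD : D ∈ P) : #(partsMeeting P D) ≤ 1 := by
  have h : ∀ C ∈ partsMeeting P D, C = D := fun C hC => by
    obtain ⟨hC, hCD⟩ := mem_filter.1 hC
    obtain ⟨u, huC, huD⟩ := not_disjoint_iff.1 hCD
    exact hP.eq_of_mem_of_mem hC hD huC huD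
  exact card_le_one.2 fun C hC C' hC' => (h C hC).trans (h C' hC').symm

/-- After merging `B` and `C`, only the new part `B ∪ C` meets two old parts. -/
theorem IsPartition.card_partsMeeting_le {P Q : Finset (Finset V)} (hP : IsPartition P)
    (h : ReflGen MergeStep P Q) : ∃ D₀, ∀ D ∈ Q,
      #(partsMeeting P D) ≤ 2 ∧ (D ≠ D₀ → #(partsMeeting P D) ≤ 1) := by
  rcases h with _ | ⟨B, hB, C, hC, -, rfl⟩
  · exact ⟨∅, fun D hD => ⟨(hP.card_partsMeeting_le_one hD).trans (by omega),
      fun _ => hP.card_partsMeeting_le_one hD⟩⟩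
  refine ⟨B ∪ C, fun D hD => ?_⟩
  rcases mem_merge.1 hD with rfl | ⟨hD, -, hDC⟩
  · refine ⟨(card_le_card (t := {B, C}) fun X hX => ?_).trans card_le_two, fun h => absurd rfl h⟩
    obtain ⟨hX, hXD⟩ := mem_filter.1 hX
    obtain ⟨u, huX, hu⟩ := not_disjoint_iff.1 hXD
    rcases mem_union.1 hu with hu | hu
    · simp [hP.eq_of_mem_of_mem hX hB huX hu]
    · simp [hP.eq_of_mem_of_mem hX hC huX hu]
  · exact ⟨(hP.card_partsMeeting_le_one hD).trans (by omega),
      fun _ => hP.card_partsMeeting_le_one hD⟩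

theorem IsPartition.of_reflGen_mergeStep {P Q : Finset (Finset V)} (hP : IsPartition P)
    (h : ReflGen MergeStep P Q) : IsPartition Q := by
  rcases h with _ | h
  exacts [hP, h.isPartition hP]

theorem refines_of_reflGen_mergeStep {P Q : Finset (Finset V)} (h : ReflGen MergeStep P Q) :
    Refines P Q := by
  rcases h with _ | h
  exacts [fun X hX => ⟨X, hX, subset_rfl⟩, h.refines]

theorem reflTransGen_of_reflGen {α : Type*} {r : α → α → Prop} {p : α → Prop} {a b : α}
    (h : ReflGen r a b) (hb : p b) : ReflTransGen (fun x y => r x y ∧ p y) a b := by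
  rcases h with _ | h
  exacts [ReflTransGen.refl, ReflTransGen.single ⟨h, hb⟩]

theorem reflGen_mergeStep_union_right {P Q R : Finset (Finset V)} (h : ReflGen MergeStep P Q)
    (hPR : Disjoint P R) : ReflGen MergeStep (P ∪ R) (Q ∪ R) := by
  rcases h with _ | h
  exacts [ReflGen.refl, ReflGen.single (h.union_right hPR)]

theorem IsPartition.reflTransGen_of_refines {R : Finset (Finset V)} (hR : IsPartition R) :
    ∀ {P : Finset (Finset V)}, IsPartition P → Refines P R →
      ReflTransGen (fun X Y => MergeStep X Y ∧ Refines Y R) P R := by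
  intro P
  induction h : #P using Nat.strong_induction_on generalizing P with
  | _ n ih =>
    intro hP hPR
    by_cases hstrict : ∃ X ∈ P, ∃ D ∈ R, X ⊆ D ∧ X ≠ D
    · obtain ⟨X, hX, D, hD, hXD, hXD'⟩ := hstrict
      obtain ⟨w, hwD, hwX⟩ := not_subset.1 fun h => hXD' (hXD.antisymm h)
      obtain ⟨Y, hY, hwY⟩ := hP.cover w
      obtain ⟨D', hD', hYD'⟩ := hPR Y hY
      obtain rfl : D' = D := hR.eq_of_mem_of_mem hD' hD (hYD' hwY) hwD
      have hXY : X ≠ Y := fun h => hwX (h ▸ hwY)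
      have hstep : MergeStep P (insert (X ∪ Y) ((P.erase X).erase Y)) := ⟨X, hX, Y, hY, hXY, rfl⟩
      have hrefines : Refines (insert (X ∪ Y) ((P.erase X).erase Y)) R := by
        intro Z hZ
        rcases mem_merge.1 hZ with rfl | ⟨hZ, -⟩
        exacts [⟨D', hD', union_subset hXD hYD'⟩, hPR Z hZ]
      exact ReflTransGen.head ⟨hstep, hrefines⟩
        (ih _ (h ▸ hstep.card_lt) rfl (hstep.isPartition hP) hrefines)
    · have hPR' : P ⊆ R := fun X hX => by
        obtain ⟨D, hD, hXD⟩ := hPR X hX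
        by_cases hXD' : X = D
        exacts [hXD' ▸ hD, absurd ⟨X, hX, D, hD, hXD, hXD'⟩ hstrict]
      have : P = R := hPR'.antisymm fun D hD => by
        obtain ⟨u, hu⟩ := hR.nonempty D hD
        obtain ⟨X, hX, huX⟩ := hP.cover u
        rwa [← hR.eq_of_mem_of_mem (hPR' hX) hD huX hu]
      exact this ▸ ReflTransGen.refl


/-! ### Traces of a partition -/

section Traces

variable {α β : Type*} (e : α ↪ β) (p : β → Prop)

def trace (C : Finset α) : Finset β := (C.map e).filter p

def traces (P : Finset (Finset α)) : Finset (Finset β) :=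
  (P.image (trace e p)).filter Finset.Nonempty

variable {e p}

theorem trace_union (B C : Finset α) : trace e p (B ∪ C) = trace e p B ∪ trace e p C := by
  simp only [trace, map_union, filter_union]

theorem disjoint_trace {B C : Finset α} (h : Disjoint B C) :
    Disjoint (trace e p B) (trace e p C) :=
  ((disjoint_map e).2 h).mono (filter_subset _ _) (filter_subset _ _)

theorem mem_traces {P : Finset (Finset α)} {X : Finset β} :
    X ∈ traces e p P ↔ X.Nonempty ∧ ∃ C ∈ P, trace e p C = X := by
  simp [traces, and_comm]

theorem trace_subset_map (C : Finset α) : trace e p C ⊆ C.map e := filter_subset _ _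

theorem trace_mono {C D : Finset α} (h : C ⊆ D) : trace e p C ⊆ trace e p D :=
  filter_subset_filter _ (map_subset_map.2 h)

theorem exists_subset_map_of_mem_traces {P : Finset (Finset α)} {X : Finset β}
    (hX : X ∈ traces e p P) : ∃ C ∈ P, X ⊆ C.map e := by
  obtain ⟨-, C, hC, rfl⟩ := mem_traces.1 hX
  exact ⟨C, hC, trace_subset_map C⟩

theorem forall_of_mem_traces {P : Finset (Finset α)} {X : Finset β} (hX : X ∈ traces e p P) :
    X.Nonempty ∧ ∀ x ∈ X, p x ∧ x ∈ Set.range e := by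
  obtain ⟨hne, C, -, rfl⟩ := mem_traces.1 hX
  refine ⟨hne, fun x hx => ⟨(mem_filter.1 hx).2, ?_⟩⟩
  obtain ⟨c, -, rfl⟩ := mem_map.1 (trace_subset_map C hx)
  exact ⟨c, rfl⟩

theorem IsPartition.trace_injOn {P : Finset (Finset α)} (hP : IsPartition P) {B C : Finset α}
    (hB : B ∈ P) (hC : C ∈ P) (hne : (trace e p B).Nonempty) (h : trace e p B = trace e p C) :
    B = C :=
  by_contra fun hBC => by
    have := disjoint_trace (e := e) (p := p) (hP.disjoint B hB C hC hBC)
    rw [h, disjoint_self, bot_eq_empty] at this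
    exact hne.ne_empty (h ▸ this)

theorem reflGen_traces_of_mergeStep {P Q : Finset (Finset α)} (hP : IsPartition P)
    (h : MergeStep P Q) : ReflGen MergeStep (traces e p P) (traces e p Q) := by
  obtain ⟨B, hB, C, hC, hBC, rfl⟩ := h
  by_cases hne : (trace e p B).Nonempty ∧ (trace e p C).Nonempty
  · refine ReflGen.single ⟨_, mem_traces.2 ⟨hne.1, B, hB, rfl⟩, _, mem_traces.2 ⟨hne.2, C, hC, rfl⟩,
      fun h => hBC (hP.trace_injOn hB hC hne.1 h), ?_⟩
    ext X
    simp only [mem_traces, mem_merge]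
    constructor
    · rintro ⟨hX, D, rfl | ⟨hD, hDB, hDC⟩, rfl⟩
      · exact Or.inl (trace_union B C)
      · exact Or.inr ⟨⟨hX, D, hD, rfl⟩, fun h => hDB (hP.trace_injOn hD hB hX h),
          fun h => hDC (hP.trace_injOn hD hC hX h)⟩
    · rintro (rfl | ⟨⟨hX, D, hD, rfl⟩, hDB, hDC⟩)
      · exact ⟨hne.1.mono subset_union_left, B ∪ C, Or.inl rfl, trace_union B C⟩
      · exact ⟨hX, D, Or.inr ⟨hD, fun h => hDB (h ▸ rfl), fun h => hDC (h ▸ rfl)⟩, rfl⟩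
  · convert ReflGen.refl using 1
    have hP' : P = insert B (insert C ((P.erase B).erase C)) := by
      rw [insert_erase (mem_erase.2 ⟨hBC.symm, hC⟩), insert_erase hB]
    rw [not_and_or, not_nonempty_iff_eq_empty, not_nonempty_iff_eq_empty] at hne
    conv_rhs => rw [hP']
    rcases hne with h | h <;> simp [traces, image_insert, filter_insert, trace_union, h]

theorem card_filter_traces_le (P : Finset (Finset α)) (D : Finset α) :
    #((traces e p P).filter (· ⊆ D.map e)) ≤ #(partsMeeting P D) := by
  refine (card_le_card (t := (partsMeeting P D).image (trace e p))
    fun X hX => ?_).trans card_image_le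
  obtain ⟨⟨⟨x, hx⟩, C, hC, rfl⟩, hCD⟩ := mem_filter.1 hX |>.imp_left mem_traces.1
  obtain ⟨c, hc, rfl⟩ := mem_map.1 (mem_filter.1 hx).1
  obtain ⟨d, hd, hcd⟩ := mem_map.1 (hCD hx)
  refine mem_image.2 ⟨C, mem_filter.2 ⟨hC, not_disjoint_iff.2 ⟨c, hc, ?_⟩⟩, rfl⟩
  rwa [← e.injective hcd]

end Traces

namespace Trigraph

variable {G : Trigraph V}

theorem redAdj.symm {X Y : Finset V} (h : G.redAdj X Y) : G.redAdj Y X := by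
  refine ⟨h.1.symm, h.2.imp (fun ⟨x, hx, y, hy, hxy⟩ => ⟨y, hy, x, hx, G.red_symm _ _ hxy⟩) ?_⟩
  exact fun ⟨⟨x, hx, y, hy, hxy⟩, hmixed⟩ => ⟨⟨y, hy, x, hx, G.black_symm _ _ hxy⟩,
    fun hall => hmixed fun x hx y hy => G.black_symm _ _ (hall y hy x hx)⟩

theorem redAdj.nonempty_right {X Y : Finset V} (h : G.redAdj X Y) :
    Y.Nonempty := by
  rcases h.2 with ⟨-, -, y, hy, -⟩ | ⟨⟨-, -, y, hy, -⟩, -⟩ <;> exact ⟨y, hy⟩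

theorem redAdj.eq_of_subset_singleton {X Y : Finset V} {u : V}
    (h : G.redAdj X Y) (hY : Y ⊆ {u}) : Y = {u} :=
  (h.nonempty_right.subset_singleton_iff).1 hY

variable (G)

theorem redDeg_eq_zero_iff {P : Finset (Finset V)} {X : Finset V} :
    G.redDeg P X = 0 ↔ ∀ Y ∈ P, ¬ G.redAdj X Y := by
  rw [redDeg, card_eq_zero, filter_eq_empty_iff]

theorem redAdj_of_subset_map {s : Set V} {X Y : Finset V} {C D : Finset s}
    (hX : X ⊆ C.map (Function.Embedding.subtype (· ∈ s)))
    (hY : Y ⊆ D.map (Function.Embedding.subtype (· ∈ s))) (h : G.redAdj X Y) :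
    C = D ∨ (G.induce s).redAdj C D := by
  refine or_iff_not_imp_left.2 fun hCD => ⟨hCD, ?_⟩
  simp only [subset_iff, mem_map, Function.Embedding.coe_subtype] at hX hY
  rcases h.2 with ⟨x, hx, y, hy, hxy⟩ | ⟨⟨x, hx, y, hy, hxy⟩, hmixed⟩
  · obtain ⟨c, hc, rfl⟩ := hX hx
    obtain ⟨d, hd, rfl⟩ := hY hy
    exact Or.inl ⟨c, hc, d, hd, hxy⟩
  · obtain ⟨c, hc, rfl⟩ := hX hx
    obtain ⟨d, hd, rfl⟩ := hY hy
    refine Or.inr ⟨⟨c, hc, d, hd, hxy⟩, fun hall => hmixed fun x hx y hy => ?_⟩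
    obtain ⟨c', hc', rfl⟩ := hX hx
    obtain ⟨d', hd', rfl⟩ := hY hy
    exact hall c' hc' d' hd'

/-- Without a red edge, `a` sees either all of `D` or none of it, so any nonempty part of `D`
witnesses the adjacency. -/
theorem exists_black_iff_of_not_redAdj {s : Set V} {a : s} {D : Finset s}
    (hD : ¬ (G.induce s).redAdj {a} D) (haD : {a} ≠ D) {B : Finset V} (hB : B.Nonempty)
    (hBD : B ⊆ D.map (Function.Embedding.subtype (· ∈ s))) :
    (∃ b ∈ B, G.black b a) ↔ ∃ d ∈ D, (G.induce s).black d a := by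
  constructor
  · rintro ⟨b, hb, hba⟩
    obtain ⟨d, hd, rfl⟩ := mem_map.1 (hBD hb)
    exact ⟨d, hd, hba⟩
  · rintro ⟨d, hd, hda⟩
    have hall : ∀ d ∈ D, G.black a d := by
      by_contra hmixed
      exact hD ⟨haD, Or.inr ⟨⟨a, mem_singleton_self a, d, hd, G.black_symm _ _ hda⟩,
        fun hall => hmixed fun d' hd' => hall a (mem_singleton_self a) d' hd'⟩⟩
    obtain ⟨b, hb⟩ := hB
    obtain ⟨d', hd', rfl⟩ := mem_map.1 (hBD hb)
    exact ⟨_, hb, G.black_symm _ _ (hall d' hd')⟩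

def Homogeneous (v : V) (X : Finset V) : Prop :=
  (∀ x ∈ X, G.black v x) ∨ ∀ x ∈ X, ¬ G.black v x

theorem homogeneous_singleton (v u : V) : G.Homogeneous v {u} := by
  by_cases h : G.black v u <;> simp [Homogeneous, h]

variable {G} in
theorem Homogeneous.mono {v : V} {X Y : Finset V} (hX : G.Homogeneous v X)
    (hYX : Y ⊆ X) : G.Homogeneous v Y :=
  hX.imp (fun h y hy => h y (hYX hy)) fun h y hy => h y (hYX hy)

theorem not_redAdj_singleton_of_homogeneous {v : V} (hv : ∀ u, ¬ G.red v u) {X : Finset V}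
    (hX : G.Homogeneous v X) : ¬ G.redAdj {v} X := by
  rintro ⟨-, ⟨x, hx, y, -, hxy⟩ | ⟨⟨x, hx, y, hy, hxy⟩, hmixed⟩⟩
  · exact hv y (mem_singleton.1 hx ▸ hxy)
  · rw [mem_singleton.1 hx] at hxy
    rcases hX with hall | hnone
    · exact hmixed fun x hx y hy => mem_singleton.1 hx ▸ hall y hy
    · exact hnone y hy hxy

/-! ### Twin classes -/

section Twins

variable {W : Type*} [Fintype W] (H : Trigraph W) (A : Finset W)

/-- Two vertices outside `A` get the same key iff they have the same black neighbours in `A`;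
every vertex of `A` has a key of its own. -/
def twinKey (u : W) : Option W × Finset W :=
  (if u ∈ A then some u else none, A.filter (H.black u))

def twinClass (u : W) : Finset W :=
  univ.filter fun w => H.twinKey A w = H.twinKey A u

theorem mem_twinClass {u w : W} : w ∈ H.twinClass A u ↔ H.twinKey A w = H.twinKey A u := by
  simp [twinClass]

theorem mem_twinClass_self (u : W) : u ∈ H.twinClass A u := (H.mem_twinClass A).2 rfl

theorem isPartition_twinClasses : IsPartition (univ.image (H.twinClass A)) where
  nonempty := by
    simp only [mem_image, mem_univ, true_and, forall_exists_index, forall_apply_eq_imp_iff]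
    exact fun u => ⟨u, H.mem_twinClass_self A u⟩
  disjoint := by
    simp only [mem_image, mem_univ, true_and, forall_exists_index, forall_apply_eq_imp_iff]
    intro u w huw
    refine disjoint_left.2 fun x hxu hxw => huw ?_
    ext y
    rw [mem_twinClass, mem_twinClass, ← (H.mem_twinClass A).1 hxu, (H.mem_twinClass A).1 hxw]
  cover u := ⟨H.twinClass A u, mem_image_of_mem _ (mem_univ u), H.mem_twinClass_self A u⟩

theorem twinClass_of_mem {a : W} (ha : a ∈ A) : H.twinClass A a = {a} := by
  ext w
  simp only [mem_twinClass, twinKey, mem_singleton, ha, if_true, Prod.mk.injEq]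
  constructor
  · by_cases hw : w ∈ A <;> simp_all
  · rintro rfl
    simp [ha]

theorem black_iff_of_mem_twinClass {u w a : W} (hw : w ∈ H.twinClass A u) (ha : a ∈ A) :
    H.black w a ↔ H.black u a := by
  simp only [mem_twinClass, twinKey, Prod.mk.injEq] at hw
  simpa [ha] using congrArg (a ∈ ·) hw.2

theorem respects_of_refines_twinClasses (hA : ∀ a ∈ A, ∀ u, ¬ H.red a u)
    {P : Finset (Finset W)} (hP : IsPartition P) (hPR : Refines P (univ.image (H.twinClass A))) :
    H.Respects A P := by
  have hmem : ∀ a ∈ A, ({a} : Finset W) ∈ P := fun a ha => by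
    obtain ⟨X, hX, haX⟩ := hP.cover a
    obtain ⟨D, hD, hXD⟩ := hPR X hX
    obtain ⟨u, -, rfl⟩ := mem_image.1 hD
    have : X ⊆ {a} := by
      rwa [← H.twinClass_of_mem A ha, (H.isPartition_twinClasses A).eq_of_mem_of_mem
        (mem_image_of_mem _ (mem_univ a)) hD (H.mem_twinClass_self A a) (hXD haX)]
    rwa [← (Nonempty.subset_singleton_iff ⟨a, haX⟩).1 this]
  refine ⟨hmem, fun a ha => H.redDeg_eq_zero_iff.2 fun Y hY => ?_⟩
  rintro ⟨-, ⟨x, hx, y, -, hxy⟩ | ⟨⟨x, hx, y₀, hy₀, hxy₀⟩, hmixed⟩⟩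
  · exact hA a ha y (mem_singleton.1 hx ▸ hxy)
  obtain ⟨D, hD, hYD⟩ := hPR Y hY
  obtain ⟨u, -, rfl⟩ := mem_image.1 hD
  rw [mem_singleton] at hx
  subst hx
  refine hmixed fun x hx y hy => ?_
  rw [mem_singleton.1 hx]
  have := (H.black_iff_of_mem_twinClass A (hYD hy) ha).trans
    (H.black_iff_of_mem_twinClass A (hYD hy₀) ha).symm
  exact H.black_symm _ _ (this.2 (H.black_symm _ _ hxy₀))

theorem exists_black_twinClass_iff {u a : W} (ha : a ∈ A) :
    (∃ b ∈ H.twinClass A u, H.black b a) ↔ H.black u a :=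
  ⟨fun ⟨_, hb, hba⟩ => (H.black_iff_of_mem_twinClass A hb ha).1 hba,
    fun h => ⟨u, H.mem_twinClass_self A u, h⟩⟩

theorem completeFor_twinClasses : H.CompleteFor A (univ.image (H.twinClass A)) := by
  simp only [CompleteFor, mem_image, mem_univ, true_and, forall_exists_index,
    forall_apply_eq_imp_iff]
  intro u w huw hu hw hsame
  have hu' : u ∉ A := disjoint_left.1 hu (H.mem_twinClass_self A u)
  have hw' : w ∉ A := disjoint_left.1 hw (H.mem_twinClass_self A w)
  refine huw (congrArg (fun k => univ.filter fun x => H.twinKey A x = k) ?_)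
  simp only [twinKey, hu', hw', if_false, Prod.mk.injEq, true_and]
  ext a
  simp only [mem_filter, and_congr_right_iff]
  intro ha
  rw [← H.exists_black_twinClass_iff A ha, ← H.exists_black_twinClass_iff A ha]
  exact hsame a ha

theorem exists_complete_respecting_isCSeq (hA : ∀ a ∈ A, ∀ u, ¬ H.red a u) :
    ∃ len f, IsCSeq W len f ∧ (∀ i ≤ len, H.Respects A (f i)) ∧ H.CompleteFor A (f len) := by
  have hdiscrete : Refines (discretePart W) (univ.image (H.twinClass A)) := by
    simp only [Refines, discretePart, mem_image, mem_univ, true_and, forall_exists_index,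
      forall_apply_eq_imp_iff, exists_exists_eq_and, singleton_subset_iff]
    exact fun u => ⟨u, H.mem_twinClass_self A u⟩
  obtain ⟨len, f, hf, hlast, hrefines⟩ := exists_isCSeq_of_reflTransGen hdiscrete
    ((H.isPartition_twinClasses A).reflTransGen_of_refines isPartition_discretePart hdiscrete)
  refine ⟨len, f, hf, fun i hi => ?_, hlast ▸ H.completeFor_twinClasses A⟩
  exact H.respects_of_refines_twinClasses A hA (hf.isPartition i hi) (hrefines i hi)

end Twins


theorem exists_isCSeq_maxRedDeg_le_twwR [Fintype V] (G : Trigraph V) (A : Finset V)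
    (h : ∃ len f, IsCSeq V len f ∧ (∀ i ≤ len, G.Respects A (f i)) ∧ G.CompleteFor A (f len)) :
    ∃ len f, IsCSeq V len f ∧ (∀ i ≤ len, G.Respects A (f i)) ∧ G.CompleteFor A (f len) ∧
      ∀ i ≤ len, G.maxRedDeg (f i) ≤ G.twwR A := by
  obtain ⟨len, f, hf, hresp, hcomplete⟩ := h
  exact Nat.sInf_mem (s := {w | ∃ len f, IsCSeq V len f ∧ (∀ i ≤ len, G.Respects A (f i)) ∧
      G.CompleteFor A (f len) ∧ ∀ i ≤ len, G.maxRedDeg (f i) ≤ w})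
    ⟨(range (len + 1)).sup fun i => G.maxRedDeg (f i), len, f, hf, hresp, hcomplete,
      fun i hi => le_sup (f := fun i => G.maxRedDeg (f i)) (by simpa [Nat.lt_succ_iff])⟩

theorem twwR_eq_zero_of_red [Fintype V] {G : Trigraph V} {A : Finset V} {a u : V}
    (ha : a ∈ A) (hau : G.red a u) : G.twwR A = 0 := by
  refine Nat.sInf_eq_zero.2 (Or.inr (Set.eq_empty_iff_forall_notMem.2 ?_))
  rintro w ⟨len, f, hf, hresp, -⟩
  have hzero := (hresp 0 (Nat.zero_le _)).2 a ha
  rw [hf.1] at hzero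
  refine G.redDeg_eq_zero_iff.1 hzero {u} (by simp [discretePart]) ⟨?_, ?_⟩
  · simpa using fun h : a = u => G.red_irrefl a (h ▸ hau)
  · exact Or.inl ⟨a, mem_singleton_self a, u, mem_singleton_self u, hau⟩

end Trigraph

/-! ### Lifting a contraction sequence of `G - v` -/

section Apex

variable (G : Trigraph V) (v : V) {A : Finset V}

local notation "V'" => Set.Elem (Set.ofPred fun u : V => u ≠ v)
local notation "G'" => Trigraph.induce G (Set.ofPred fun u : V => u ≠ v)
local notation "A'" => Finset.subtype (· ∈ Set.ofPred fun u : V => u ≠ v) A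
local notation "ι" => Function.Embedding.subtype (· ∈ Set.ofPred fun u : V => u ≠ v)

namespace Trigraph

/-- `G.apexSplit v Q Q` splits every part of a partition `Q` of `V ∖ {v}` according to adjacency
with `v`; `G.apexSplit v Q P` is the halfway point of the lifted merge `P → Q`, where only the
neighbours of `v` have been merged. -/
def apexSplit (P₁ P₂ : Finset (Finset V')) : Finset (Finset V) :=
  insert {v} (traces ι (G.black v) P₁ ∪ traces ι (¬ G.black v ·) P₂)

variable {G v}

theorem homogeneous_of_mem_apexSplit {P₁ P₂ : Finset (Finset V')} {X : Finset V}
    (hX : X ∈ G.apexSplit v P₁ P₂) : G.Homogeneous v X := by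
  rcases mem_insert.1 hX with rfl | hX
  · exact G.homogeneous_singleton v v
  rcases mem_union.1 hX with hX | hX
  exacts [Or.inl fun x hx => ((forall_of_mem_traces hX).2 x hx).1,
    Or.inr fun x hx => ((forall_of_mem_traces hX).2 x hx).1]

theorem refines_apexSplit {P Q : Finset (Finset V')} (hPQ : Refines P Q) :
    Refines (G.apexSplit v Q P) (G.apexSplit v Q Q) := by
  intro X hX
  rcases mem_insert.1 hX with rfl | hX
  · exact ⟨{v}, mem_insert_self _ _, subset_rfl⟩
  rcases mem_union.1 hX with hX | hX
  · exact ⟨X, mem_insert_of_mem (mem_union_left _ hX), subset_rfl⟩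
  obtain ⟨hne, C, hC, rfl⟩ := mem_traces.1 hX
  obtain ⟨D, hD, hCD⟩ := hPQ C hC
  have hsub := trace_mono (e := ι) (p := (¬ G.black v ·)) hCD
  exact ⟨_, mem_insert_of_mem (mem_union_right _ (mem_traces.2 ⟨hne.mono hsub, D, hD, rfl⟩)), hsub⟩

theorem _root_.Refines.apexSplit_cases {M : Finset (Finset V)} {Q : Finset (Finset V')}
    (hM : Refines M (G.apexSplit v Q Q)) {X : Finset V} (hX : X ∈ M) :
    G.Homogeneous v X ∧ (X ⊆ {v} ∨ ∃ D ∈ Q, X ⊆ D.map ι) := by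
  obtain ⟨Y, hY, hXY⟩ := hM X hX
  refine ⟨(homogeneous_of_mem_apexSplit hY).mono hXY, ?_⟩
  rcases mem_insert.1 hY with rfl | hY
  · exact Or.inl hXY
  obtain ⟨D, hD, hYD⟩ := (mem_union.1 hY).elim exists_subset_map_of_mem_traces
    exists_subset_map_of_mem_traces
  exact Or.inr ⟨D, hD, hXY.trans hYD⟩

/-- A red neighbour of a part inside `D ∈ Q` lies inside `D` or inside one of the at most `d`
red neighbours of `D`; these contain at most `2 (d + 1) + 1` parts of `M`, one of them the part
itself. -/
theorem maxRedDeg_le_of_refines_apexSplit (hv : ∀ u, ¬ G.red v u) {Q : Finset (Finset V')}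
    {d : ℕ} (hQd : (G').maxRedDeg Q ≤ d) {M : Finset (Finset V)}
    (hM : Refines M (G.apexSplit v Q Q)) (D₀ : Finset V')
    (hcount : ∀ D ∈ Q, #(M.filter (· ⊆ D.map ι)) ≤ 3)
    (hcount' : ∀ D ∈ Q, D ≠ D₀ → #(M.filter (· ⊆ D.map ι)) ≤ 2) :
    G.maxRedDeg M ≤ 2 * d + 2 := by
  refine Finset.sup_le fun X hX => ?_
  obtain ⟨hXhom, hXv | ⟨D, hD, hXD⟩⟩ := hM.apexSplit_cases hX
  · refine (G.redDeg_eq_zero_iff.2 fun Y hY hXY => ?_).trans_le (Nat.zero_le _)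
    rw [hXY.symm.eq_of_subset_singleton hXv] at hXY
    exact G.not_redAdj_singleton_of_homogeneous hv (hM.apexSplit_cases hY).1 hXY
  set T := insert D (Q.filter ((G').redAdj D))
  have hT : #T ≤ d + 1 :=
    (card_insert_le _ _).trans (Nat.add_le_add_right ((le_sup hD).trans hQd) 1)
  have hsub : insert X (M.filter (G.redAdj X)) ⊆ T.biUnion fun D' => M.filter (· ⊆ D'.map ι) := by
    refine insert_subset (mem_biUnion.2 ⟨D, mem_insert_self _ _, mem_filter.2 ⟨hX, hXD⟩⟩)
      fun Y hY => ?_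
    obtain ⟨hY, hXY⟩ := mem_filter.1 hY
    obtain ⟨-, hYv | ⟨D', hD', hYD'⟩⟩ := hM.apexSplit_cases hY
    · rw [hXY.eq_of_subset_singleton hYv] at hXY
      exact absurd hXY.symm (G.not_redAdj_singleton_of_homogeneous hv hXhom)
    refine mem_biUnion.2 ⟨D', ?_, mem_filter.2 ⟨hY, hYD'⟩⟩
    rcases G.redAdj_of_subset_map hXD hYD' hXY with rfl | hDD'
    exacts [mem_insert_self _ _, mem_insert_of_mem (mem_filter.2 ⟨hD', hDD'⟩)]
  have hsum : ∑ D' ∈ T, #(M.filter (· ⊆ D'.map ι)) ≤ 2 * #T + 1 := by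
    calc ∑ D' ∈ T, #(M.filter (· ⊆ D'.map ι))
        ≤ ∑ D' ∈ T, (2 + if D' = D₀ then 1 else 0) :=
          sum_le_sum fun D' hD' => by
            have hD'Q := insert_subset hD (filter_subset _ _) hD'
            split_ifs with h
            exacts [hcount D' hD'Q, hcount' D' hD'Q h]
      _ ≤ 2 * #T + 1 := by
          rw [sum_add_distrib, sum_const, smul_eq_mul, sum_ite_eq']
          split_ifs <;> omega
  have hXX : X ∉ M.filter (G.redAdj X) := fun h => (mem_filter.1 h).2.1 rfl
  have := (card_le_card hsub).trans (card_biUnion_le.trans hsum)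
  rw [card_insert_of_notMem hXX] at this
  exact (Nat.le_of_add_le_add_right (this.trans (by omega)) : G.redDeg M X ≤ 2 * d + 2)

theorem respects_of_refines_apexSplit (hv : ∀ u, ¬ G.red v u) (hvA : v ∉ A)
    {Q : Finset (Finset V')} (hQA : (G').Respects A' Q) {M : Finset (Finset V)}
    (hM : Refines M (G.apexSplit v Q Q)) (hvM : {v} ∈ M) (hAM : ∀ a ∈ A, {a} ∈ M) :
    G.Respects (insert v A) M := by
  refine ⟨(forall_mem_insert _ _ _).2 ⟨hvM, hAM⟩, (forall_mem_insert _ _ _).2 ⟨?_, fun a ha => ?_⟩⟩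
  · exact G.redDeg_eq_zero_iff.2 fun Y hY =>
      G.not_redAdj_singleton_of_homogeneous hv (hM.apexSplit_cases hY).1
  have hav : a ≠ v := fun h => hvA (h ▸ ha)
  have ha' : (⟨a, hav⟩ : V') ∈ A' := mem_subtype.2 ha
  refine G.redDeg_eq_zero_iff.2 fun Y hY haY => ?_
  obtain ⟨-, hYv | ⟨D, hD, hYD⟩⟩ := hM.apexSplit_cases hY
  · rw [haY.eq_of_subset_singleton hYv] at haY
    exact G.not_redAdj_singleton_of_homogeneous hv (G.homogeneous_singleton v a) haY.symm
  rcases G.redAdj_of_subset_map (C := {⟨a, hav⟩}) (by simp) hYD haY with rfl | hred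
  · exact haY.1 (haY.eq_of_subset_singleton (by simpa using hYD)).symm
  · exact (G').redDeg_eq_zero_iff.1 (hQA.2 _ ha') D hD hred

theorem not_forall_black_iff_of_mem_traces {p : V → Prop} {Q : Finset (Finset V')}
    (hQ : IsPartition Q)
    (hQA : (G').Respects A' Q) (hQc : (G').CompleteFor A' Q) {B C : Finset V}
    (hB : B ∈ traces ι p Q) (hC : C ∈ traces ι p Q) (hBC : B ≠ C) (hBA : Disjoint B A)
    (hCA : Disjoint C A) : ¬ ∀ a ∈ A, ((∃ b ∈ B, G.black b a) ↔ ∃ c ∈ C, G.black c a) := by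
  obtain ⟨hBne, D, hD, rfl⟩ := mem_traces.1 hB
  obtain ⟨hCne, D', hD', rfl⟩ := mem_traces.1 hC
  have hdisj : ∀ {D}, D ∈ Q → (trace ι p D).Nonempty → Disjoint (trace ι p D) A →
      Disjoint D A' := fun {D} hD hne hDA => by
    refine disjoint_left.2 fun a haD haA => ?_
    obtain rfl := hQ.eq_of_mem_of_mem hD (hQA.1 a haA) haD (mem_singleton_self a)
    obtain ⟨x, hx⟩ := hne
    obtain rfl : x = a := by simpa using trace_subset_map _ hx
    exact disjoint_left.1 hDA hx (mem_subtype.1 haA)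
  intro hsame
  refine hQc D hD D' hD' (fun h => hBC (h ▸ rfl)) (hdisj hD hBne hBA) (hdisj hD' hCne hCA)
    fun a ha => ?_
  have key : ∀ {D}, D ∈ Q → Disjoint D A' → (trace ι p D).Nonempty →
      ((∃ b ∈ trace ι p D, G.black b a) ↔ ∃ d ∈ D, (G').black d a) := fun hD hDA hne =>
    G.exists_black_iff_of_not_redAdj ((G').redDeg_eq_zero_iff.1 (hQA.2 a ha) _ hD)
      (fun h => disjoint_left.1 hDA (h ▸ mem_singleton_self a) ha) hne (trace_subset_map _)
  rw [← key hD (hdisj hD hBne hBA) hBne, ← key hD' (hdisj hD' hCne hCA) hCne]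
  exact hsame a (mem_subtype.1 ha)

theorem completeFor_apexSplit {Q : Finset (Finset V')} (hQ : IsPartition Q)
    (hQA : (G').Respects A' Q) (hQc : (G').CompleteFor A' Q) :
    G.CompleteFor (insert v A) (G.apexSplit v Q Q) := by
  intro B hB C hC hBC hBA hCA hsame
  have hside : ∀ {X}, X ∈ G.apexSplit v Q Q → Disjoint X (insert v A) →
      X ∈ traces ι (G.black v) Q ∨ X ∈ traces ι (¬ G.black v ·) Q := fun hX hXA =>
    mem_union.1 ((mem_insert.1 hX).resolve_left
      fun h => disjoint_left.1 hXA (h ▸ mem_singleton_self v) (mem_insert_self v A))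
  have hcross : ∀ {X Y}, X ∈ traces ι (G.black v) Q → Y ∈ traces ι (¬ G.black v ·) Q →
      ¬ ((∃ x ∈ X, G.black x v) ↔ ∃ y ∈ Y, G.black y v) := fun hX hY h => by
    obtain ⟨⟨x, hx⟩, hX'⟩ := forall_of_mem_traces hX
    obtain ⟨y, hy, hyv⟩ := h.1 ⟨x, hx, G.black_symm _ _ (hX' x hx).1⟩
    exact ((forall_of_mem_traces hY).2 y hy).1 (G.black_symm _ _ hyv)
  have hsameA := fun a ha => hsame a (mem_insert_of_mem ha)
  have hsamev := hsame v (mem_insert_self v A)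
  rw [disjoint_insert_right] at hBA hCA
  rcases hside hB (disjoint_insert_right.2 hBA) with hB | hB <;>
    rcases hside hC (disjoint_insert_right.2 hCA) with hC | hC
  · exact not_forall_black_iff_of_mem_traces hQ hQA hQc hB hC hBC hBA.2 hCA.2 hsameA
  · exact hcross hB hC hsamev
  · exact hcross hC hB hsamev.symm
  · exact not_forall_black_iff_of_mem_traces hQ hQA hQc hB hC hBC hBA.2 hCA.2 hsameA

theorem reflGen_apexSplit_left {P₁ Q₁ P₂ : Finset (Finset V')} (hP₁ : IsPartition P₁)
    (h : MergeStep P₁ Q₁) : ReflGen MergeStep (G.apexSplit v P₁ P₂) (G.apexSplit v Q₁ P₂) := by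
  simp only [apexSplit, ← union_insert]
  refine reflGen_mergeStep_union_right (reflGen_traces_of_mergeStep hP₁ h)
    (disjoint_left.2 fun X hX hX' => ?_)
  obtain ⟨⟨x, hx⟩, hX1⟩ := forall_of_mem_traces hX
  rcases mem_insert.1 hX' with rfl | hX'
  · exact G.black_irrefl v (mem_singleton.1 hx ▸ (hX1 x hx).1)
  · exact ((forall_of_mem_traces hX').2 x hx).1 (hX1 x hx).1

theorem reflGen_apexSplit_right {P₁ P₂ Q₂ : Finset (Finset V')} (hP₂ : IsPartition P₂)
    (h : MergeStep P₂ Q₂) : ReflGen MergeStep (G.apexSplit v P₁ P₂) (G.apexSplit v P₁ Q₂) := by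
  rw [apexSplit, apexSplit, union_comm, ← union_insert, union_comm (traces _ _ P₁), ← union_insert]
  refine reflGen_mergeStep_union_right (reflGen_traces_of_mergeStep hP₂ h)
    (disjoint_left.2 fun X hX hX' => ?_)
  obtain ⟨⟨x, hx⟩, hX2⟩ := forall_of_mem_traces hX
  rcases mem_insert.1 hX' with rfl | hX'
  · obtain ⟨⟨u, hu⟩, hux⟩ := (hX2 x hx).2
    exact hu (hux.trans (mem_singleton.1 hx))
  · exact (hX2 x hx).1 ((forall_of_mem_traces hX').2 x hx).1

theorem apexSplit_discretePart [Fintype V] :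
    G.apexSplit v (discretePart V') (discretePart V') = discretePart V := by
  ext X
  simp only [apexSplit, discretePart, mem_insert, mem_union, mem_traces, mem_image, mem_univ,
    true_and, exists_exists_eq_and, trace, map_singleton, filter_singleton]
  constructor
  · rintro (rfl | ⟨hX, u, rfl⟩ | ⟨hX, u, rfl⟩)
    · exact ⟨v, rfl⟩
    all_goals
      split_ifs at hX ⊢ <;> first | exact ⟨_, rfl⟩ | exact absurd hX not_nonempty_empty
  · rintro ⟨u, rfl⟩
    by_cases huv : u = v
    · exact Or.inl (huv ▸ rfl)
    by_cases hu : G.black v u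
    · exact Or.inr (Or.inl ⟨singleton_nonempty u, ⟨u, huv⟩, by simp [hu]⟩)
    · exact Or.inr (Or.inr ⟨singleton_nonempty u, ⟨u, huv⟩, by simp [hu]⟩)

theorem maxRedDeg_apexSplit_le (hv : ∀ u, ¬ G.red v u) {P Q : Finset (Finset V')}
    (hP : IsPartition P) (hPQ : ReflGen MergeStep P Q) {d : ℕ} (hQd : (G').maxRedDeg Q ≤ d) :
    G.maxRedDeg (G.apexSplit v Q P) ≤ 2 * d + 2 := by
  obtain ⟨D₀, hD₀⟩ := hP.card_partsMeeting_le hPQ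
  have hsplit : ∀ D ∈ Q, #((G.apexSplit v Q P).filter (· ⊆ D.map ι)) ≤
      1 + #(partsMeeting P D) := fun D hD => by
    have hvD : ¬ {v} ⊆ D.map ι := fun h => by simpa using h (mem_singleton_self v)
    rw [apexSplit, filter_insert, if_neg hvD, filter_union]
    exact (card_union_le _ _).trans (add_le_add ((card_filter_traces_le _ _).trans
      ((hP.of_reflGen_mergeStep hPQ).card_partsMeeting_le_one hD))
      (card_filter_traces_le _ _))
  refine maxRedDeg_le_of_refines_apexSplit hv hQd
    (refines_apexSplit (refines_of_reflGen_mergeStep hPQ)) D₀ (fun D hD => ?_) fun D hD hDD₀ => ?_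
  · have := hsplit D hD
    have := (hD₀ D hD).1
    omega
  · have := hsplit D hD
    have := (hD₀ D hD).2 hDD₀
    omega

theorem respects_apexSplit (hv : ∀ u, ¬ G.red v u) (hvA : v ∉ A) {P Q : Finset (Finset V')}
    (hPQ : Refines P Q) (hPA : (G').Respects A' P) (hQA : (G').Respects A' Q) :
    G.Respects (insert v A) (G.apexSplit v Q P) := by
  refine respects_of_refines_apexSplit hv hvA hQA (refines_apexSplit hPQ) (mem_insert_self _ _)
    fun a ha => mem_insert_of_mem ?_
  have hav : a ≠ v := fun h => hvA (h ▸ ha)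
  have ha' : (⟨a, hav⟩ : V') ∈ A' := mem_subtype.2 ha
  by_cases hb : G.black v a
  · exact mem_union_left _ (mem_traces.2 ⟨by simp, _, hQA.1 _ ha', by simp [trace, hb]⟩)
  · exact mem_union_right _ (mem_traces.2 ⟨by simp, _, hPA.1 _ ha', by simp [trace, hb]⟩)

theorem maxRedDeg_le_and_respects_apexSplit (hv : ∀ u, ¬ G.red v u) (hvA : v ∉ A)
    {P Q : Finset (Finset V')} (hP : IsPartition P) (hPQ : ReflGen MergeStep P Q) {d : ℕ}
    (hQd : (G').maxRedDeg Q ≤ d) (hPA : (G').Respects A' P) (hQA : (G').Respects A' Q) :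
    G.maxRedDeg (G.apexSplit v Q P) ≤ 2 * d + 2 ∧ G.Respects (insert v A) (G.apexSplit v Q P) :=
  ⟨maxRedDeg_apexSplit_le hv hP hPQ hQd,
    respects_apexSplit hv hvA (refines_of_reflGen_mergeStep hPQ) hPA hQA⟩

theorem reflTransGen_apexSplit [Fintype V] (hv : ∀ u, ¬ G.red v u) (hvA : v ∉ A) {len d : ℕ}
    {g : ℕ → Finset (Finset V')} (hg : IsCSeq V' len g)
    (hresp : ∀ i ≤ len, (G').Respects A' (g i)) (hwidth : ∀ i ≤ len, (G').maxRedDeg (g i) ≤ d) :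
    ∀ k ≤ len, ReflTransGen
      (fun M N => MergeStep M N ∧ G.maxRedDeg N ≤ 2 * d + 2 ∧ G.Respects (insert v A) N)
      (discretePart V) (G.apexSplit v (g k) (g k))
  | 0, _ => by rw [hg.1, apexSplit_discretePart]
  | k + 1, hk => by
    have hP := hg.isPartition k (by omega)
    have hstep := hg.2 k hk
    exact ((reflTransGen_apexSplit hv hvA hg hresp hwidth k (by omega)).trans
      (reflTransGen_of_reflGen (reflGen_apexSplit_left hP hstep)
        (maxRedDeg_le_and_respects_apexSplit hv hvA hP (ReflGen.single hstep) (hwidth _ hk)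
          (hresp k (by omega)) (hresp _ hk)))).trans
      (reflTransGen_of_reflGen (reflGen_apexSplit_right hP hstep)
        (maxRedDeg_le_and_respects_apexSplit hv hvA (hstep.isPartition hP) ReflGen.refl
          (hwidth _ hk) (hresp _ hk) (hresp _ hk)))

theorem exists_isCSeq_apexSplit [Fintype V] (hv : ∀ u, ¬ G.red v u) (hvA : v ∉ A) {len d : ℕ}
    {g : ℕ → Finset (Finset V')} (hg : IsCSeq V' len g)
    (hresp : ∀ i ≤ len, (G').Respects A' (g i)) (hwidth : ∀ i ≤ len, (G').maxRedDeg (g i) ≤ d) :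
    ∃ len' f, IsCSeq V len' f ∧ f len' = G.apexSplit v (g len) (g len) ∧
      ∀ i ≤ len', G.maxRedDeg (f i) ≤ 2 * d + 2 ∧ G.Respects (insert v A) (f i) := by
  have h0 := maxRedDeg_le_and_respects_apexSplit hv hvA (hg.isPartition 0 (Nat.zero_le _))
    ReflGen.refl (hwidth 0 (Nat.zero_le _)) (hresp 0 (Nat.zero_le _)) (hresp 0 (Nat.zero_le _))
  rw [hg.1, apexSplit_discretePart] at h0
  exact exists_isCSeq_of_reflTransGen h0 (reflTransGen_apexSplit hv hvA hg hresp hwidth len le_rfl)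

end Trigraph

end Apex

/-- apex theorem for respecting twin-width: for a vertex `v` of red
degree 0 and `A ⊆ V(G) ∖ {v}`, `tww(G, A ∪ {v}) ≤ 2·tww(G − v, A) + 2`. -/
theorem twwR_insert_apex {V : Type*} [Fintype V] (G : Trigraph V) (v : V)
    (hv : ∀ u, ¬ G.red v u) (A : Finset V) (hvA : v ∉ A) :
    G.twwR (insert v A) ≤
      2 * (G.induce {u | u ≠ v}).twwR (A.subtype (· ∈ ({u | u ≠ v} : Set V))) + 2 := by
  by_cases hred : ∃ a ∈ A, ∃ u, G.red a u
  · obtain ⟨a, ha, u, hau⟩ := hred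
    rw [Trigraph.twwR_eq_zero_of_red (mem_insert_of_mem ha) hau]
    exact Nat.zero_le _
  simp only [not_exists, not_and] at hred
  obtain ⟨len, g, hg, hresp, hcomplete, hwidth⟩ :=
    (G.induce {u | u ≠ v}).exists_isCSeq_maxRedDeg_le_twwR _
      ((G.induce {u | u ≠ v}).exists_complete_respecting_isCSeq _
        fun a ha u => hred a (mem_subtype.1 ha) u)
  obtain ⟨len', f, hf, hlast, hgood⟩ := Trigraph.exists_isCSeq_apexSplit hv hvA hg hresp hwidth
  exact Nat.sInf_le ⟨len', f, hf, fun i hi => (hgood i hi).2,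
    hlast ▸ Trigraph.completeFor_apexSplit (hg.isPartition len le_rfl) (hresp len le_rfl) hcomplete,
    fun i hi => (hgood i hi).1⟩

end
end
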